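/- arXiv:1909.04890 — 12 statements merged into one kernel-verified Lean document; each statement's English description precedes it below -/
import Mathlib

section
/- Let w : ℝ≥0 → ℝ≥0 be non-decreasing with x ↦ w(x)/x nonincreasing on (0,∞), let a ≥ 0 and b > 0, and define δ(w,b) = inf { δ ≥ 0 : ∀ x ≥ δ, w(x) ≤ b x² }, assumed positive and finite. Then for every θ ∈ (0,1] and u ≥ 0, (a/b)·w(√u) ≤ (θ/2)·(u + δ(w,b)²) + a²·δ(w,b)²/θ. -/
open Set

/-- Lemma (fix_w1): for nondecreasing `w` with `w x / x` nonincreasing on `(0,∞)`,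
`a ≥ 0`, `b > 0`, and `δ(w,b) = inf {δ ≥ 0 : ∀ x ≥ δ, w x ≤ b x²}` positive and finite,
for every `θ ∈ (0,1]` and `u ≥ 0`:
`(a/b) w(√u) ≤ (θ/2)(u + δ(w,b)²) + a² δ(w,b)² / θ`. -/
theorem stmt_1 (w : ℝ → ℝ) (a b : ℝ) (ha : 0 ≤ a) (hb : 0 < b)
    (hw_nonneg : ∀ x, 0 ≤ x → 0 ≤ w x)
    (hw_mono : ∀ ⦃x y : ℝ⦄, 0 ≤ x → x ≤ y → w x ≤ w y)
    (hw_ratio : ∀ ⦃x y : ℝ⦄, 0 < x → x ≤ y → w y / y ≤ w x / x)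
    (S : Set ℝ) (hS : S = {d : ℝ | 0 ≤ d ∧ ∀ x, d ≤ x → w x ≤ b * x ^ 2})
    (hne : S.Nonempty) (hpos : 0 < sInf S) :
    ∀ θ ∈ Set.Ioc (0 : ℝ) 1, ∀ u, 0 ≤ u →
      (a / b) * w (Real.sqrt u) ≤ (θ / 2) * (u + (sInf S) ^ 2) + a ^ 2 * (sInf S) ^ 2 / θ := by
  set δ := sInf S with hδdef
  have hbdd : BddBelow S := ⟨0, fun d hd => by rw [hS] at hd; exact hd.1⟩
  have hgt : ∀ x, δ < x → w x ≤ b * x ^ 2 := by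
    intro x hx
    obtain ⟨d, hdS, hdx⟩ := exists_lt_of_csInf_lt hne hx
    rw [hS] at hdS
    exact hdS.2 x hdx.le
  have hwδ : w δ ≤ b * δ ^ 2 := by
    have h1 : Filter.Tendsto (fun x : ℝ => b * x ^ 2) (nhdsWithin δ (Ioi δ))
        (nhds (b * δ ^ 2)) := by
      exact ((continuous_const.mul (continuous_pow 2)).tendsto δ).mono_left
        nhdsWithin_le_nhds
    refine ge_of_tendsto h1 ?_
    filter_upwards [self_mem_nhdsWithin] with x hx
    exact le_trans (hw_mono hpos.le (le_of_lt hx)) (hgt x hx)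
  have hlin : ∀ x, δ ≤ x → w x ≤ b * δ * x := by
    intro x hx
    rcases eq_or_lt_of_le hx with h | h
    · rw [← h]; nlinarith
    · have hx0 : 0 < x := lt_trans hpos h
      have := hw_ratio hpos hx
      have h2 : w δ / δ ≤ b * δ := by
        rw [div_le_iff₀ hpos]; nlinarith
      have h3 : w x / x ≤ b * δ := le_trans this h2
      calc w x = (w x / x) * x := by field_simp
        _ ≤ (b * δ) * x := by
            exact mul_le_mul_of_nonneg_right h3 hx0.le
  intro θ hθ u hu
  obtain ⟨hθ0, hθ1⟩ := hθ
  set s := Real.sqrt u with hsdef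
  have hs0 : 0 ≤ s := Real.sqrt_nonneg u
  have hs2 : s ^ 2 = u := Real.sq_sqrt hu
  have hab : 0 ≤ a / b := div_nonneg ha hb.le
  rcases le_or_gt δ s with hcase | hcase
  · -- s ≥ δ : w s ≤ b δ s
    have h1 : (a / b) * w s ≤ (a / b) * (b * δ * s) :=
      mul_le_mul_of_nonneg_left (hlin s hcase) hab
    have h2 : (a / b) * (b * δ * s) = a * δ * s := by field_simp
    have h3 : a * δ * s ≤ (θ / 2) * (u + δ ^ 2) + a ^ 2 * δ ^ 2 / θ := by
      rw [← hs2]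
      have key : 0 ≤ (θ * s - a * δ) ^ 2 := sq_nonneg _
      have hδ2 : 0 ≤ δ ^ 2 := sq_nonneg δ
      have e : a ^ 2 * δ ^ 2 / θ * θ = a ^ 2 * δ ^ 2 := by field_simp
      nlinarith [mul_nonneg (sq_nonneg a) hδ2, mul_pos hθ0 hθ0,
        mul_nonneg (mul_nonneg (sq_nonneg a) hδ2) hθ0.le]
    linarith [h1, h2 ▸ h1, h3]
  · -- s < δ : w s ≤ w δ ≤ b δ²
    have h1 : w s ≤ b * δ ^ 2 := le_trans (hw_mono hs0 hcase.le) hwδ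
    have h2 : (a / b) * w s ≤ (a / b) * (b * δ ^ 2) :=
      mul_le_mul_of_nonneg_left h1 hab
    have h3 : (a / b) * (b * δ ^ 2) = a * δ ^ 2 := by field_simp
    have h4 : a * δ ^ 2 ≤ (θ / 2) * (u + δ ^ 2) + a ^ 2 * δ ^ 2 / θ := by
      have key : a ≤ θ / 2 + a ^ 2 / θ := by
        rw [← sub_nonneg]
        have : θ / 2 + a ^ 2 / θ - a = ((θ - a) ^ 2 + a ^ 2) / (2 * θ) := by
          field_simp; ring
        rw [this]; positivity
      have hδ2 : 0 ≤ δ ^ 2 := sq_nonneg δ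
      have := mul_le_mul_of_nonneg_right key hδ2
      have hθu : 0 ≤ (θ / 2) * u := by positivity
      have e1 : a ^ 2 / θ * δ ^ 2 = a ^ 2 * δ ^ 2 / θ := by ring
      nlinarith
    linarith [h3 ▸ h2]
end

section
/- If w is nondecreasing, w(x)/x is nonincreasing on (0,∞), r > 0, and δ(w,r) = inf { δ ≥ 0 : ∀ x ≥ δ, w(x) ≤ r x² } is positive and finite, then δ(w,r) is a solution of the equation w(x)/x = r·x, i.e. w(δ(w,r)) = r·δ(w,r)², provided w is continuous at δ(w,r). -/
open Set

/-- Remark: if `w` is nondecreasing, `w x / x` is nonincreasing on `(0,∞)`, `r > 0`, and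
`δ(w,r) = inf {δ ≥ 0 : ∀ x ≥ δ, w x ≤ r x²}` is positive and finite, and `w` is continuous
at `δ(w,r)`, then `δ(w,r)` solves `w x / x = r x`, i.e. `w (δ(w,r)) = r δ(w,r)²`. -/
theorem stmt_2 (w : ℝ → ℝ) (r : ℝ) (hr : 0 < r)
    (hw_nonneg : ∀ x, 0 ≤ x → 0 ≤ w x)
    (hw_mono : ∀ ⦃x y : ℝ⦄, 0 ≤ x → x ≤ y → w x ≤ w y)
    (hw_ratio : ∀ ⦃x y : ℝ⦄, 0 < x → x ≤ y → w y / y ≤ w x / x)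
    (S : Set ℝ) (hS : S = {d : ℝ | 0 ≤ d ∧ ∀ x, d ≤ x → w x ≤ r * x ^ 2})
    (hne : S.Nonempty) (hpos : 0 < sInf S)
    (hcont : ContinuousAt w (sInf S)) :
    w (sInf S) = r * (sInf S) ^ 2 := by
  set δ := sInf S with hδ
  have hbdd : BddBelow S := ⟨0, fun d hd => by rw [hS] at hd; exact hd.1⟩
  -- every x > δ satisfies w x ≤ r x²
  have hA : ∀ x, δ < x → w x ≤ r * x ^ 2 := by
    intro x hx
    obtain ⟨d, hdS, hdx⟩ := (csInf_lt_iff hbdd hne).mp hx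
    rw [hS] at hdS
    exact hdS.2 x hdx.le
  -- w δ ≤ r δ²
  have hle : w δ ≤ r * δ ^ 2 := by
    have htend : Filter.Tendsto (fun x => r * x ^ 2) (nhdsWithin δ (Ioi δ))
        (nhds (r * δ ^ 2)) := by
      apply Filter.Tendsto.mono_left _ nhdsWithin_le_nhds
      exact (continuous_const.mul (continuous_pow 2)).continuousAt
    refine ge_of_tendsto htend ?_
    filter_upwards [self_mem_nhdsWithin] with x hx
    exact le_trans (hw_mono hpos.le (le_of_lt hx)) (hA x hx)
  refine le_antisymm hle ?_
  by_contra hlt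
  push_neg at hlt
  -- then w x < r x² in a neighborhood of δ
  have hcont2 : ContinuousAt (fun x : ℝ => r * x ^ 2) δ :=
    (continuous_const.mul (continuous_pow 2)).continuousAt
  have hev : ∀ᶠ x in nhds δ, w x < r * x ^ 2 := hcont.eventually_lt hcont2 hlt
  obtain ⟨ε, hε, hball⟩ := Metric.eventually_nhds_iff.mp hev
  set m := min ε δ with hm
  have hmpos : 0 < m := lt_min hε hpos
  set d := δ - m / 2 with hd
  have hdlt : d < δ := by simp [hd]; linarith
  have hdpos : 0 < d := by
    have : m ≤ δ := min_le_right _ _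
    simp only [hd]; linarith
  have hdS : d ∈ S := by
    rw [hS]
    refine ⟨hdpos.le, fun x hx => ?_⟩
    rcases lt_or_ge δ x with h | h
    · exact hA x h
    · refine (hball ?_).le
      rw [Real.dist_eq, abs_of_nonpos (by linarith)]
      have : m ≤ ε := min_le_left _ _
      simp only [hd] at hx
      linarith
  exact absurd (csInf_le hbdd hdS) (not_le.mpr hdlt)
end

section
/- Let a, b, c ≥ 0, r > 0 and g(x) = max( a·x, √(b·x³ + c·x²) ). Then the fixed point δ(g,r) = inf{ δ ≥ 0 : ∀ x ≥ δ, g(x) ≤ r x² } satisfies δ(g,r)² ≤ max( a²/r², b²/r⁴ + 2c/r² ) ≤ a²/r² + b²/r⁴ + 2c/r². -/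
/-!
Both terms of the maximum are at most `r x²` as soon as `x ≥ 0` and `x²` is at least the
corresponding term of `max (a²/r²) (b²/r⁴ + 2c/r²)`: for the linear term this is `|a| ≤ r x`,
and for the square root it reduces to `b x + c ≤ r² x²`, which follows from AM-GM applied to
`b x`. Hence `√M` lies in the set, where `M` is that maximum, and its infimum is at most `√M`.
-/

lemma sInf_sq_le_of_forall_sq_le {P : ℝ → Prop} {M : ℝ} (hM : 0 ≤ M)
    (hP : ∀ x, 0 ≤ x → M ≤ x ^ 2 → P x) :
    sInf {d : ℝ | 0 ≤ d ∧ ∀ x, d ≤ x → P x} ^ 2 ≤ M := by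
  set S := {d : ℝ | 0 ≤ d ∧ ∀ x, d ≤ x → P x}
  have hsqrt_mem : √M ∈ S := by
    refine ⟨Real.sqrt_nonneg M, fun x hx => ?_⟩
    have hx0 : 0 ≤ x := (Real.sqrt_nonneg M).trans hx
    exact hP x hx0 ((Real.sqrt_le_left hx0).mp hx)
  have hS_nonneg : ∀ d ∈ S, 0 ≤ d := fun d hd => hd.1
  have hinf_nonneg : 0 ≤ sInf S := le_csInf ⟨√M, hsqrt_mem⟩ hS_nonneg
  have hinf_le : sInf S ≤ √M := csInf_le ⟨0, hS_nonneg⟩ hsqrt_mem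
  exact (Real.le_sqrt hinf_nonneg hM).mp hinf_le

lemma mul_le_mul_sq_of_sq_div_sq_le {a r x : ℝ} (hr : 0 < r) (hx : 0 ≤ x)
    (h : a ^ 2 / r ^ 2 ≤ x ^ 2) : a * x ≤ r * x ^ 2 := by
  have hsq : a ^ 2 ≤ (r * x) ^ 2 := by
    rw [div_le_iff₀ (by positivity)] at h
    linarith
  have ha : a ≤ r * x := (abs_le_of_sq_le_sq' hsq (by positivity)).2
  calc a * x ≤ r * x * x := mul_le_mul_of_nonneg_right ha hx
    _ = r * x ^ 2 := by ring

lemma mul_add_le_sq_mul_sq {b c r x : ℝ} (hr : 0 < r)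
    (h : b ^ 2 / r ^ 4 + 2 * c / r ^ 2 ≤ x ^ 2) : b * x + c ≤ r ^ 2 * x ^ 2 := by
  have hr2 : r ^ 2 ≠ 0 := by positivity
  have hc : 2 * c ≤ r ^ 2 * x ^ 2 - b ^ 2 / r ^ 2 := by
    have := mul_le_mul_of_nonneg_left h (sq_nonneg r)
    field_simp at this ⊢
    linarith
  -- AM-GM: `2 b x ≤ r² x² + b² / r²`
  have hbx : 2 * (b * x) ≤ r ^ 2 * x ^ 2 + b ^ 2 / r ^ 2 := by
    field_simp
    nlinarith [sq_nonneg (r ^ 2 * x - b)]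
  linarith

lemma sqrt_mul_pow_three_add_le {b c r x : ℝ} (hr : 0 < r)
    (h : b ^ 2 / r ^ 4 + 2 * c / r ^ 2 ≤ x ^ 2) :
    √(b * x ^ 3 + c * x ^ 2) ≤ r * x ^ 2 := by
  rw [Real.sqrt_le_left (by positivity)]
  calc b * x ^ 3 + c * x ^ 2 = (b * x + c) * x ^ 2 := by ring
    _ ≤ r ^ 2 * x ^ 2 * x ^ 2 :=
        mul_le_mul_of_nonneg_right (mul_add_le_sq_mul_sq hr h) (sq_nonneg x)
    _ = (r * x ^ 2) ^ 2 := by ring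

theorem stmt_4_general (a b c r : ℝ) (hc : 0 ≤ c) (hr : 0 < r)
    (S : Set ℝ)
    (hS : S = {d : ℝ | 0 ≤ d ∧ ∀ x, d ≤ x →
      max (a * x) (Real.sqrt (b * x ^ 3 + c * x ^ 2)) ≤ r * x ^ 2}) :
    (sInf S) ^ 2 ≤ max (a ^ 2 / r ^ 2) (b ^ 2 / r ^ 4 + 2 * c / r ^ 2) ∧
      max (a ^ 2 / r ^ 2) (b ^ 2 / r ^ 4 + 2 * c / r ^ 2)
        ≤ a ^ 2 / r ^ 2 + b ^ 2 / r ^ 4 + 2 * c / r ^ 2 := by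
  subst hS
  have hlin_nonneg : 0 ≤ a ^ 2 / r ^ 2 := by positivity
  have hquad_nonneg : 0 ≤ b ^ 2 / r ^ 4 + 2 * c / r ^ 2 := by positivity
  refine ⟨sInf_sq_le_of_forall_sq_le (hlin_nonneg.trans (le_max_left _ _)) ?_, ?_⟩
  · intro x hx hM
    exact max_le (mul_le_mul_sq_of_sq_div_sq_le hr hx ((le_max_left _ _).trans hM))
      (sqrt_mul_pow_three_add_le hr ((le_max_right _ _).trans hM))
  · exact max_le (by linarith) (by linarith)

/-- Lemma (fixed_pt): for `a, b, c ≥ 0`, `r > 0` and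
`g x = max (a x) (√(b x³ + c x²))`, the fixed point
`δ(g,r) = inf {δ ≥ 0 : ∀ x ≥ δ, g x ≤ r x²}` satisfies
`δ(g,r)² ≤ max (a²/r²) (b²/r⁴ + 2c/r²) ≤ a²/r² + b²/r⁴ + 2c/r²`. -/
theorem stmt_4 (a b c r : ℝ) (ha : 0 ≤ a) (hb : 0 ≤ b) (hc : 0 ≤ c) (hr : 0 < r)
    (S : Set ℝ)
    (hS : S = {d : ℝ | 0 ≤ d ∧ ∀ x, d ≤ x →
      max (a * x) (Real.sqrt (b * x ^ 3 + c * x ^ 2)) ≤ r * x ^ 2}) :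
    (sInf S) ^ 2 ≤ max (a ^ 2 / r ^ 2) (b ^ 2 / r ^ 4 + 2 * c / r ^ 2) ∧
      max (a ^ 2 / r ^ 2) (b ^ 2 / r ^ 4 + 2 * c / r ^ 2)
        ≤ a ^ 2 / r ^ 2 + b ^ 2 / r ^ 4 + 2 * c / r ^ 2 :=
  stmt_4_general a b c r hc hr S hS
end

section
/- Let f : ℝ≥0 → ℝ≥0 be a non-decreasing function, integrable with respect to the measure e^{-x} dx on [0,∞), with f(x) → +∞ as x → +∞. Let X be a nonnegative random variable such that P(X > f(x)) ≤ e^{-x} for all x ≥ 0. Then E[X] ≤ ∫₀^∞ f(x) e^{-x} dx. -/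
/-!
Both sides are integrals of tails: `E[X] = ∫₀^∞ P(X > t) dt`, and the right-hand side is
`E[f(E)] = ∫₀^∞ P(f(E) > t) dt` for `E` exponential of rate one. So it suffices that `X` is
stochastically dominated by `f(E)`. If `p = P(X > t) > 0` and `c = -log p`, the tail bound rules out
`f x ≤ t` for every `x > c`, hence `P(f(E) > t) ≥ P(E > c) = p`.
-/

open MeasureTheory Set ProbabilityTheory Real

lemma expMeasure_one_eq_withDensity :
    expMeasure 1 = (volume.restrict (Ici 0)).withDensity fun x => ENNReal.ofReal (exp (-x)) := by
  have hpdf : exponentialPDF 1 = (Ici 0).indicator fun x => ENNReal.ofReal (exp (-x)) := by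
    ext x
    simp only [exponentialPDF_eq, one_mul, indicator, mem_Ici]
    split_ifs <;> simp
  change volume.withDensity (exponentialPDF 1) = _
  rw [hpdf, withDensity_indicator measurableSet_Ici]

lemma expMeasure_Ioi {r a : ℝ} (hr : 0 < r) (ha : 0 ≤ a) :
    expMeasure r (Ioi a) = ENNReal.ofReal (exp (-(r * a))) := by
  have := isProbabilityMeasure_expMeasure hr
  have hcdf : 0 ≤ 1 - exp (-(r * a)) :=
    sub_nonneg.2 (exp_le_one_iff.2 (neg_nonpos.2 (mul_nonneg hr.le ha)))
  rw [← compl_Iic, prob_compl_eq_one_sub measurableSet_Iic, ← ofReal_cdf, cdf_expMeasure_eq hr,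
    if_pos ha, ← ENNReal.ofReal_one, ← ENNReal.ofReal_sub _ hcdf, sub_sub_cancel]

lemma ae_nonneg_expMeasure_one : ∀ᵐ x ∂expMeasure 1, 0 ≤ x := by
  rw [expMeasure_one_eq_withDensity]
  exact withDensity_absolutelyContinuous _ _ (ae_restrict_mem measurableSet_Ici)

lemma lintegral_expMeasure_one (g : ℝ → ENNReal) :
    ∫⁻ x, g x ∂expMeasure 1 = ∫⁻ x in Ici 0, ENNReal.ofReal (exp (-x)) * g x := by
  rw [expMeasure_one_eq_withDensity, lintegral_withDensity_eq_lintegral_mul_non_measurable _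
    (by fun_prop) (ae_of_all _ fun _ => ENNReal.ofReal_lt_top)]
  rfl

lemma aemeasurable_expMeasure_one_of_integrableOn {f : ℝ → ℝ}
    (hf : IntegrableOn (fun x => f x * exp (-x)) (Ici 0)) : AEMeasurable f (expMeasure 1) := by
  have : AEMeasurable f (volume.restrict (Ici 0)) := by
    refine (hf.aemeasurable.mul measurable_exp.aemeasurable).congr (ae_of_all _ fun x => ?_)
    simp [mul_assoc, ← exp_add]
  rw [expMeasure_one_eq_withDensity]
  exact this.mono_ac (withDensity_absolutelyContinuous _ _)

lemma ofReal_setIntegral_mul_exp_neg_eq_lintegral_expMeasure {f : ℝ → ℝ}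
    (hf0 : ∀ x, 0 ≤ x → 0 ≤ f x) (hf : IntegrableOn (fun x => f x * exp (-x)) (Ici 0)) :
    ENNReal.ofReal (∫ x in Ici 0, f x * exp (-x)) =
      ∫⁻ x, ENNReal.ofReal (f x) ∂expMeasure 1 := by
  rw [ofReal_integral_eq_lintegral_ofReal hf ((ae_restrict_iff' measurableSet_Ici).2
      (ae_of_all _ fun x hx => mul_nonneg (hf0 x hx) (exp_pos _).le)),
    lintegral_expMeasure_one]
  refine setLIntegral_congr_fun measurableSet_Ici fun x hx => ?_
  rw [ENNReal.ofReal_mul (hf0 x hx), mul_comm]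

lemma lintegral_ofReal_le_of_meas_lt_le {α β : Type*} [MeasurableSpace α] [MeasurableSpace β]
    {μ : Measure α} {ν : Measure β} {X : α → ℝ} {Y : β → ℝ}
    (hX0 : 0 ≤ᵐ[μ] X) (hX : AEMeasurable X μ) (hY0 : 0 ≤ᵐ[ν] Y) (hY : AEMeasurable Y ν)
    (h : ∀ t, 0 < t → μ {a | t < X a} ≤ ν {b | t < Y b}) :
    ∫⁻ a, ENNReal.ofReal (X a) ∂μ ≤ ∫⁻ b, ENNReal.ofReal (Y b) ∂ν := by
  rw [lintegral_eq_lintegral_meas_lt μ hX0 hX, lintegral_eq_lintegral_meas_lt ν hY0 hY]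
  exact setLIntegral_mono' measurableSet_Ioi h

lemma meas_lt_le_expMeasure_one {Ω : Type*} [MeasurableSpace Ω] {μ : Measure Ω}
    [IsProbabilityMeasure μ] {X : Ω → ℝ} {f : ℝ → ℝ}
    (htail : ∀ x, 0 ≤ x → μ {ω | f x < X ω} ≤ ENNReal.ofReal (exp (-x))) (t : ℝ) :
    μ {ω | t < X ω} ≤ expMeasure 1 {x | t < f x} := by
  set p := μ {ω | t < X ω}
  rcases eq_or_ne p 0 with hp | hp
  · simp [hp]
  have hp_pos : 0 < p.toReal := ENNReal.toReal_pos hp (measure_ne_top μ _)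
  set c := -log p.toReal
  have hc : 0 ≤ c := neg_nonneg.2 (log_nonpos hp_pos.le measureReal_le_one)
  have hpc : p = ENNReal.ofReal (exp (-c)) := by
    rw [neg_neg, exp_log hp_pos, ENNReal.ofReal_toReal (measure_ne_top μ _)]
  have hsub : Ioi c ⊆ {x | t < f x} := by
    refine fun x hx => show t < f x from lt_of_not_ge fun hfx => ?_
    have : p ≤ ENNReal.ofReal (exp (-x)) :=
      (measure_mono fun ω (hω : t < X ω) => hfx.trans_lt hω).trans (htail x (hc.trans hx.le))
    rw [hpc, ENNReal.ofReal_le_ofReal_iff (exp_pos _).le, exp_le_exp] at this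
    linarith [mem_Ioi.1 hx]
  calc p = expMeasure 1 (Ioi c) := by rw [expMeasure_Ioi one_pos hc, one_mul, hpc]
    _ ≤ expMeasure 1 {x | t < f x} := measure_mono hsub

theorem stmt_5_general {Ω : Type*} [MeasurableSpace Ω] (μ : Measure Ω) [IsProbabilityMeasure μ]
    (X : Ω → ℝ) (hX : Measurable X) (hX0 : ∀ ω, 0 ≤ X ω)
    (f : ℝ → ℝ) (hf0 : ∀ x, 0 ≤ x → 0 ≤ f x)
    (hfint : IntegrableOn (fun x => f x * Real.exp (-x)) (Set.Ici 0))
    (htail : ∀ x, 0 ≤ x → μ {ω | f x < X ω} ≤ ENNReal.ofReal (Real.exp (-x))) :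
    ∫⁻ ω, ENNReal.ofReal (X ω) ∂μ
      ≤ ENNReal.ofReal (∫ x in Set.Ici (0 : ℝ), f x * Real.exp (-x)) := by
  rw [ofReal_setIntegral_mul_exp_neg_eq_lintegral_expMeasure hf0 hfint]
  refine lintegral_ofReal_le_of_meas_lt_le (ae_of_all _ hX0) hX.aemeasurable ?_
    (aemeasurable_expMeasure_one_of_integrableOn hfint) fun t _ => meas_lt_le_expMeasure_one htail t
  filter_upwards [ae_nonneg_expMeasure_one] with x hx using hf0 x hx

/-- Lemma (prob_to_exp): if `f : ℝ≥0 → ℝ≥0` is nondecreasing, tends to `+∞`, is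
integrable against `e^{-x} dx` on `[0,∞)`, and the nonnegative random variable `X`
satisfies the tail bound `P(X > f x) ≤ e^{-x}` for all `x ≥ 0`, then
`E[X] ≤ ∫₀^∞ f x e^{-x} dx`. -/
theorem stmt_5 {Ω : Type*} [MeasurableSpace Ω] (μ : Measure Ω) [IsProbabilityMeasure μ]
    (X : Ω → ℝ) (hX : Measurable X) (hX0 : ∀ ω, 0 ≤ X ω)
    (f : ℝ → ℝ) (hf0 : ∀ x, 0 ≤ x → 0 ≤ f x)
    (hfmono : ∀ ⦃x y : ℝ⦄, 0 ≤ x → x ≤ y → f x ≤ f y)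
    (hftop : Filter.Tendsto f Filter.atTop Filter.atTop)
    (hfint : IntegrableOn (fun x => f x * Real.exp (-x)) (Set.Ici 0))
    (htail : ∀ x, 0 ≤ x → μ {ω | f x < X ω} ≤ ENNReal.ofReal (Real.exp (-x))) :
    ∫⁻ ω, ENNReal.ofReal (X ω) ∂μ
      ≤ ENNReal.ofReal (∫ x in Set.Ici (0 : ℝ), f x * Real.exp (-x)) :=
  stmt_5_general μ X hX hX0 f hf0 hfint htail
end

section
/- Let H be a Hilbert space and h : H → ℝ≥0 a continuous convex function. For λ > 0, let t_λ be the unique minimizer of t ↦ h(t) + λ‖t‖². Then for any 0 < λ ≤ μ, we have ‖t_λ − t_μ‖² ≤ ‖t_λ‖² − ‖t_μ‖². In particular the regularization path λ ↦ ‖t_λ‖ is nonincreasing. -/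
/-! A minimizer `a` of `h + ν‖·‖²` satisfies the first-order condition `-2ν a ∈ ∂h(a)`, obtained by
comparing with `h + ν‖·‖²` along the segment from `a` to any `b` and letting the step go to `0`.
Adding the two subgradient inequalities at `t_λ` and `t_μ` gives
`λ ‖t_λ - t_μ‖² ≤ (μ - λ) ⟪t_μ, t_λ - t_μ⟫`, so `⟪t_μ, t_λ - t_μ⟫ ≥ 0`, and the claim is the
expansion `‖t_λ‖² = ‖t_μ‖² + 2 ⟪t_μ, t_λ - t_μ⟫ + ‖t_λ - t_μ‖²`. -/

open Set Filter Topology RealInnerProductSpace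

theorem nonneg_of_forall_mem_Ioc_add_mul_nonneg {A B : ℝ}
    (h : ∀ θ ∈ Ioc (0 : ℝ) 1, 0 ≤ A + θ * B) :
    0 ≤ A := by
  have hlim : Tendsto (fun θ : ℝ => A + θ * B) (𝓝 0) (𝓝 (A + 0 * B)) :=
    tendsto_const_nhds.add (tendsto_id.mul_const B)
  rw [zero_mul, add_zero] at hlim
  exact ge_of_tendsto (hlim.mono_left nhdsWithin_le_nhds)
    (eventually_of_mem (Ioc_mem_nhdsGT one_pos) h)

section Ridge

variable {H : Type*} [NormedAddCommGroup H] [InnerProductSpace ℝ H]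

theorem norm_add_smul_sq_real (a v : H) (θ : ℝ) :
    ‖a + θ • v‖ ^ 2 = ‖a‖ ^ 2 + θ * (2 * ⟪a, v⟫) + θ ^ 2 * ‖v‖ ^ 2 := by
  rw [norm_add_sq_real, real_inner_smul_right, norm_smul, mul_pow, Real.norm_eq_abs, sq_abs]
  ring

theorem ConvexOn.sub_le_inner_of_isMinOn_add_mul_norm_sq {h : H → ℝ}
    (hconv : ConvexOn ℝ univ h) {ν : ℝ} {a : H}
    (hmin : IsMinOn (fun t => h t + ν * ‖t‖ ^ 2) univ a) (b : H) :
    h a - h b ≤ 2 * ν * ⟪a, b - a⟫ := by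
  have hsegment : ∀ θ ∈ Ioc (0 : ℝ) 1,
      0 ≤ θ * (h b - h a + 2 * ν * ⟪a, b - a⟫ + θ * (ν * ‖b - a‖ ^ 2)) := by
    rintro θ ⟨hθ0, hθ1⟩
    have hconvex : h (a + θ • (b - a)) ≤ (1 - θ) * h a + θ * h b := by
      have := hconv.2 (mem_univ a) (mem_univ b) (sub_nonneg.2 hθ1) hθ0.le (by ring)
      rwa [show (1 - θ) • a + θ • b = a + θ • (b - a) by module] at this
    have hcompare := isMinOn_univ_iff.1 hmin (a + θ • (b - a))
    simp only [norm_add_smul_sq_real] at hcompare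
    nlinarith
  refine sub_nonneg.1 (nonneg_of_forall_mem_Ioc_add_mul_nonneg (B := ν * ‖b - a‖ ^ 2)
    fun θ hθ => ?_)
  have := nonneg_of_mul_nonneg_right (hsegment θ hθ) hθ.1
  linarith

theorem inner_sub_nonneg_of_isMinOn_add_mul_norm_sq {h : H → ℝ} (hconv : ConvexOn ℝ univ h)
    {lam mu : ℝ} (hlam : 0 < lam) (hlm : lam ≤ mu) {tl tm : H}
    (htl : IsMinOn (fun t => h t + lam * ‖t‖ ^ 2) univ tl)
    (htm : IsMinOn (fun t => h t + mu * ‖t‖ ^ 2) univ tm) :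
    0 ≤ ⟪tm, tl - tm⟫ := by
  have hl := hconv.sub_le_inner_of_isMinOn_add_mul_norm_sq htl tm
  have hm := hconv.sub_le_inner_of_isMinOn_add_mul_norm_sq htm tl
  have hcross : ⟪tl, tm - tl⟫ = -⟪tm, tl - tm⟫ - ‖tl - tm‖ ^ 2 := by
    rw [← neg_sub tl tm, inner_neg_right, ← real_inner_self_eq_norm_sq, inner_sub_left]
    ring
  have hkey : lam * ‖tl - tm‖ ^ 2 ≤ (mu - lam) * ⟪tm, tl - tm⟫ := by nlinarith
  rcases hlm.lt_or_eq with hlt | rfl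
  · nlinarith [sq_nonneg ‖tl - tm‖]
  · have : tl - tm = 0 := by
      simpa using le_antisymm (by nlinarith) (sq_nonneg ‖tl - tm‖)
    simp [this]

end Ridge

theorem stmt_8_general {H : Type*} [NormedAddCommGroup H] [InnerProductSpace ℝ H]
    (h : H → ℝ) (hhconv : ConvexOn ℝ Set.univ h)
    (lam mu : ℝ) (hlam : 0 < lam) (hlm : lam ≤ mu)
    (tl tm : H)
    (htl : ∀ t : H, h tl + lam * ‖tl‖ ^ 2 ≤ h t + lam * ‖t‖ ^ 2)
    (htm : ∀ t : H, h tm + mu * ‖tm‖ ^ 2 ≤ h t + mu * ‖t‖ ^ 2) :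
    ‖tl - tm‖ ^ 2 ≤ ‖tl‖ ^ 2 - ‖tm‖ ^ 2 ∧ ‖tm‖ ≤ ‖tl‖ := by
  have hinner := inner_sub_nonneg_of_isMinOn_add_mul_norm_sq hhconv hlam hlm
    (isMinOn_univ_iff.2 htl) (isMinOn_univ_iff.2 htm)
  have hexpand : ‖tl‖ ^ 2 = ‖tm‖ ^ 2 + 2 * ⟪tm, tl - tm⟫ + ‖tl - tm‖ ^ 2 := by
    rw [← norm_add_sq_real, add_sub_cancel]
  have hdist : ‖tl - tm‖ ^ 2 ≤ ‖tl‖ ^ 2 - ‖tm‖ ^ 2 := by linarith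
  refine ⟨hdist, (pow_le_pow_iff_left₀ (norm_nonneg _) (norm_nonneg _) two_ne_zero).1 ?_⟩
  nlinarith [sq_nonneg ‖tl - tm‖]

/-- Lemma (ridge_reg_prop): let `h : H → ℝ` be a nonnegative continuous convex function
on a Hilbert space, and for `λ > 0` let `t_λ` minimize `t ↦ h t + λ‖t‖²`. Then for
`0 < λ ≤ μ`, `‖t_λ - t_μ‖² ≤ ‖t_λ‖² - ‖t_μ‖²`; in particular `‖t_μ‖ ≤ ‖t_λ‖`. -/
theorem stmt_8 {H : Type*} [NormedAddCommGroup H] [InnerProductSpace ℝ H]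
    (h : H → ℝ) (hh0 : ∀ t, 0 ≤ h t) (hhconv : ConvexOn ℝ Set.univ h)
    (hhcont : Continuous h)
    (lam mu : ℝ) (hlam : 0 < lam) (hlm : lam ≤ mu)
    (tl tm : H)
    (htl : ∀ t : H, h tl + lam * ‖tl‖ ^ 2 ≤ h t + lam * ‖t‖ ^ 2)
    (htm : ∀ t : H, h tm + mu * ‖tm‖ ^ 2 ≤ h t + mu * ‖t‖ ^ 2) :
    ‖tl - tm‖ ^ 2 ≤ ‖tl‖ ^ 2 - ‖tm‖ ^ 2 ∧ ‖tm‖ ≤ ‖tl‖ :=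
  stmt_8_general h hhconv lam mu hlam hlm tl tm htl htm
end

section
/- Let g : ℝ → ℝ be a differentiable convex function attaining its minimum at u*. Suppose there exist ε > 0, δ > 0 such that |g'(u)| ≥ ε|u − u*| for all u ∈ [u* − δ, u* + δ]. Then for all u, v ∈ ℝ, (u − v)² ≤ max( 4/ε, (4/(εδ))·|u − v| ) · ( g(u) + g(v) − 2g(u*) ). -/
open intervalIntegral in
lemma growth_right (g : ℝ → ℝ) (hg : Differentiable ℝ g) (hmono : Monotone (deriv g))
    (ustar ε δ : ℝ) (hε : 0 < ε) (hδ : 0 < δ) (h0 : deriv g ustar = 0)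
    (hgrad : ∀ u ∈ Set.Icc (ustar - δ) (ustar + δ), ε * |u - ustar| ≤ |deriv g u|)
    (u : ℝ) (hu : ustar ≤ u) :
    ε / 2 * ((u - ustar) * min (u - ustar) δ) ≤ g u - g ustar := by
  have hd0 : ∀ t, ustar ≤ t → 0 ≤ deriv g t := fun t ht => h0 ▸ hmono ht
  have hftc : ∀ a b : ℝ, (∫ t in a..b, deriv g t) = g b - g a := fun a b =>
    integral_deriv_eq_sub (fun x _ => hg x) (hmono.intervalIntegrable)
  have hlin : ∀ b, ustar ≤ b → b ≤ ustar + δ →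
      ε / 2 * (b - ustar) ^ 2 ≤ g b - g ustar := by
    intro b hb1 hb2
    rw [← hftc ustar b]
    have hcomp : (∫ t in ustar..b, ε * (t - ustar)) ≤ ∫ t in ustar..b, deriv g t := by
      apply integral_mono_on hb1
      · exact (intervalIntegrable_id.sub intervalIntegrable_const).const_mul ε
      · exact hmono.intervalIntegrable
      · intro t ht
        have ht1 : ustar ≤ t := ht.1
        have ht2 : t ≤ b := ht.2
        have habs : ε * |t - ustar| ≤ |deriv g t| := by
          apply hgrad
          constructor <;> nlinarith
        rw [abs_of_nonneg (by linarith), abs_of_nonneg (hd0 t ht1)] at habs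
        exact habs
    have hval : (∫ t in ustar..b, ε * (t - ustar)) = ε / 2 * (b - ustar) ^ 2 := by
      rw [intervalIntegral.integral_const_mul]
      rw [intervalIntegral.integral_sub intervalIntegrable_id intervalIntegrable_const]
      rw [integral_id, intervalIntegral.integral_const, smul_eq_mul]
      ring
    linarith [hval ▸ hcomp]
  rcases le_or_gt u (ustar + δ) with hcase | hcase
  · have := hlin u hu hcase
    have hmin' : min (u - ustar) δ = u - ustar := min_eq_left (by linarith)
    rw [hmin']
    nlinarith
  · have h1 : ε / 2 * δ ^ 2 ≤ g (ustar + δ) - g ustar := by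
      have := hlin (ustar + δ) (by linarith) le_rfl
      simpa using this
    have hder : ε * δ ≤ deriv g (ustar + δ) := by
      have := hgrad (ustar + δ) ⟨by linarith, le_rfl⟩
      rw [show ustar + δ - ustar = δ by ring, abs_of_pos hδ,
        abs_of_nonneg (hd0 _ (by linarith))] at this
      exact this
    have h2 : ε * δ * (u - (ustar + δ)) ≤ g u - g (ustar + δ) := by
      rw [← hftc (ustar + δ) u]
      have hcomp : (∫ _t in (ustar + δ)..u, ε * δ) ≤ ∫ t in (ustar + δ)..u, deriv g t := by
        apply integral_mono_on hcase.le intervalIntegrable_const hmono.intervalIntegrable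
        intro t ht
        exact hder.trans (hmono ht.1)
      rw [intervalIntegral.integral_const, smul_eq_mul] at hcomp
      linarith
    have hmin' : min (u - ustar) δ = δ := min_eq_right (by linarith)
    rw [hmin']
    have key : 0 ≤ ε * δ * (u - ustar - δ) :=
      mul_nonneg (mul_pos hε hδ).le (by linarith)
    nlinarith [key, h1, h2]

lemma growth_full (g : ℝ → ℝ) (hg : Differentiable ℝ g) (hmono : Monotone (deriv g))
    (ustar ε δ : ℝ) (hε : 0 < ε) (hδ : 0 < δ) (h0 : deriv g ustar = 0)
    (hgrad : ∀ u ∈ Set.Icc (ustar - δ) (ustar + δ), ε * |u - ustar| ≤ |deriv g u|)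
    (u : ℝ) :
    ε / 2 * (|u - ustar| * min |u - ustar| δ) ≤ g u - g ustar := by
  rcases le_or_gt ustar u with hu | hu
  · rw [abs_of_nonneg (by linarith)]
    exact growth_right g hg hmono ustar ε δ hε hδ h0 hgrad u hu
  · set G : ℝ → ℝ := fun x => g (2 * ustar - x) with hGdef
    have hGdiff : Differentiable ℝ G :=
      hg.comp ((differentiable_const _).sub differentiable_id)
    have hGd : ∀ x, deriv G x = -deriv g (2 * ustar - x) := by
      intro x
      have hinner : HasDerivAt (fun x : ℝ => 2 * ustar - x) (-1) x := by
        simpa using (hasDerivAt_id x).const_sub (2 * ustar)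
      have hG : HasDerivAt G (deriv g (2 * ustar - x) * -1) x :=
        (hg (2 * ustar - x)).hasDerivAt.comp x hinner
      rw [hG.deriv]
      ring
    have hGmono : Monotone (deriv G) := by
      intro x y hxy
      rw [hGd, hGd]
      exact neg_le_neg (hmono (by linarith))
    have hG0 : deriv G ustar = 0 := by
      rw [hGd, show 2 * ustar - ustar = ustar by ring, h0, neg_zero]
    have hGgrad : ∀ x ∈ Set.Icc (ustar - δ) (ustar + δ), ε * |x - ustar| ≤ |deriv G x| := by
      intro x hx
      rw [hGd, abs_neg]
      have hmem : 2 * ustar - x ∈ Set.Icc (ustar - δ) (ustar + δ) := by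
        constructor <;> [linarith [hx.2]; linarith [hx.1]]
      have := hgrad _ hmem
      rwa [show 2 * ustar - x - ustar = -(x - ustar) by ring, abs_neg] at this
    have := growth_right G hGdiff hGmono ustar ε δ hε hδ hG0 hGgrad (2 * ustar - u)
      (by linarith)
    have heq1 : G (2 * ustar - u) = g u := by simp [hGdef]
    have heq2 : G ustar = g ustar := by
      simp only [hGdef]; rw [show 2 * ustar - ustar = ustar by ring]
    have heq3 : 2 * ustar - u - ustar = |u - ustar| := by
      rw [abs_of_neg (by linarith)]; ring
    rw [heq1, heq2, heq3] at this
    exact this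


/-- Lemma (lem_min_cvx): let `g : ℝ → ℝ` be differentiable and convex with global
minimum at `u*`, and suppose `|g'(u)| ≥ ε|u - u*|` on `[u* - δ, u* + δ]` with
`ε, δ > 0`. Then for all `u, v`:
`(u - v)² ≤ max (4/ε) ((4/(εδ))|u - v|) · (g u + g v - 2 g u*)`. -/
theorem stmt_9 (g : ℝ → ℝ) (hg : Differentiable ℝ g) (hconv : ConvexOn ℝ Set.univ g)
    (ustar : ℝ) (hmin : ∀ u, g ustar ≤ g u)
    (ε δ : ℝ) (hε : 0 < ε) (hδ : 0 < δ)
    (hgrad : ∀ u ∈ Set.Icc (ustar - δ) (ustar + δ), ε * |u - ustar| ≤ |deriv g u|) :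
    ∀ u v : ℝ,
      (u - v) ^ 2 ≤ max (4 / ε) (4 / (ε * δ) * |u - v|) * (g u + g v - 2 * g ustar) := by
  have hloc : IsLocalMin g ustar := Filter.Eventually.of_forall (fun x => hmin x)
  have h0 : deriv g ustar = 0 := hloc.deriv_eq_zero
  have hmono : Monotone (deriv g) := fun x y hxy =>
    hconv.monotoneOn_deriv (fun x _ => hg x)
      (Set.mem_univ x) (Set.mem_univ y) hxy
  intro u v
  have hu := growth_full g hg hmono ustar ε δ hε hδ h0 hgrad u
  have hv := growth_full g hg hmono ustar ε δ hε hδ h0 hgrad v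
  set a := |u - ustar| with ha
  set b := |v - ustar| with hb
  have ha0 : 0 ≤ a := abs_nonneg _
  have hb0 : 0 ≤ b := abs_nonneg _
  have hDu : 0 ≤ g u - g ustar := by linarith [hmin u]
  have hDv : 0 ≤ g v - g ustar := by linarith [hmin v]
  have hs : |u - v| ≤ a + b := by
    calc |u - v| = |(u - ustar) + (ustar - v)| := by ring_nf
    _ ≤ |u - ustar| + |ustar - v| := abs_add_le _ _
    _ = a + b := by rw [abs_sub_comm ustar v]
  have hs2 : (u - v) ^ 2 = |u - v| ^ 2 := (sq_abs _).symm
  have hM1 : 4 / ε ≤ max (4 / ε) (4 / (ε * δ) * |u - v|) := le_max_left _ _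
  have hM2 : 4 / (ε * δ) * |u - v| ≤ max (4 / ε) (4 / (ε * δ) * |u - v|) := le_max_right _ _
  have hsum : g u + g v - 2 * g ustar = (g u - g ustar) + (g v - g ustar) := by ring
  rw [hsum]
  rcases le_or_gt a δ with hca | hca
  · rcases le_or_gt b δ with hcb | hcb
    · -- both within δ: quadratic growth
      rw [min_eq_left hca] at hu
      rw [min_eq_left hcb] at hv
      have hgrow : ε / 2 * (a ^ 2 + b ^ 2) ≤ (g u - g ustar) + (g v - g ustar) := by
        nlinarith
      have h1 : (u - v) ^ 2 ≤ 2 * (a ^ 2 + b ^ 2) := by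
        nlinarith [sq_nonneg (a - b), sq_nonneg (a + b - |u - v|), abs_nonneg (u - v)]
      calc (u - v) ^ 2 ≤ 2 * (a ^ 2 + b ^ 2) := h1
        _ = 4 / ε * (ε / 2 * (a ^ 2 + b ^ 2)) := by field_simp; ring
        _ ≤ 4 / ε * ((g u - g ustar) + (g v - g ustar)) := by
            apply mul_le_mul_of_nonneg_left hgrow (by positivity)
        _ ≤ _ := mul_le_mul_of_nonneg_right hM1 (by linarith)
    · -- b > δ : linear growth from v
      rw [min_eq_right hcb.le] at hv
      have hb2 : |u - v| / 2 ≤ b := by linarith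
      have hgrow : ε * δ / 2 * (|u - v| / 2) ≤ (g v - g ustar) := by
        nlinarith [mul_nonneg (by positivity : (0:ℝ) ≤ ε * δ / 2)
          (by linarith : (0:ℝ) ≤ b - |u - v| / 2)]
      calc (u - v) ^ 2 = |u - v| * |u - v| := by rw [hs2]; ring
        _ ≤ 4 / (ε * δ) * |u - v| * (ε * δ / 2 * (|u - v| / 2)) := by
            rw [show 4 / (ε * δ) * |u - v| * (ε * δ / 2 * (|u - v| / 2))
              = (ε * δ) / (ε * δ) * (|u - v| * |u - v|) by ring]
            rw [div_self (by positivity), one_mul]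
        _ ≤ 4 / (ε * δ) * |u - v| * ((g u - g ustar) + (g v - g ustar)) := by
            apply mul_le_mul_of_nonneg_left (by linarith) (by positivity)
        _ ≤ _ := mul_le_mul_of_nonneg_right hM2 (by linarith)
  · -- a > δ : linear growth from u
    rw [min_eq_right hca.le] at hu
    rcases le_or_gt (|u - v| / 2) a with hb2 | hb2
    · have hgrow : ε * δ / 2 * (|u - v| / 2) ≤ (g u - g ustar) := by
        nlinarith [mul_nonneg (by positivity : (0:ℝ) ≤ ε * δ / 2)
          (by linarith : (0:ℝ) ≤ a - |u - v| / 2)]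
      calc (u - v) ^ 2 = |u - v| * |u - v| := by rw [hs2]; ring
        _ ≤ 4 / (ε * δ) * |u - v| * (ε * δ / 2 * (|u - v| / 2)) := by
            rw [show 4 / (ε * δ) * |u - v| * (ε * δ / 2 * (|u - v| / 2))
              = (ε * δ) / (ε * δ) * (|u - v| * |u - v|) by ring]
            rw [div_self (by positivity), one_mul]
        _ ≤ 4 / (ε * δ) * |u - v| * ((g u - g ustar) + (g v - g ustar)) := by
            apply mul_le_mul_of_nonneg_left (by linarith) (by positivity)
        _ ≤ _ := mul_le_mul_of_nonneg_right hM2 (by linarith)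
    · -- then b ≥ |u-v|/2 and b > a > δ
      have hbge : |u - v| / 2 ≤ b := by linarith
      have hcb : δ < b := by linarith
      rw [min_eq_right hcb.le] at hv
      have hgrow : ε * δ / 2 * (|u - v| / 2) ≤ (g v - g ustar) := by
        nlinarith [mul_nonneg (by positivity : (0:ℝ) ≤ ε * δ / 2)
          (by linarith : (0:ℝ) ≤ b - |u - v| / 2)]
      calc (u - v) ^ 2 = |u - v| * |u - v| := by rw [hs2]; ring
        _ ≤ 4 / (ε * δ) * |u - v| * (ε * δ / 2 * (|u - v| / 2)) := by
            rw [show 4 / (ε * δ) * |u - v| * (ε * δ / 2 * (|u - v| / 2))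
              = (ε * δ) / (ε * δ) * (|u - v| * |u - v|) by ring]
            rw [div_self (by positivity), one_mul]
        _ ≤ 4 / (ε * δ) * |u - v| * ((g u - g ustar) + (g v - g ustar)) := by
            apply mul_le_mul_of_nonneg_left (by linarith) (by positivity)
        _ ≤ _ := mul_le_mul_of_nonneg_right hM2 (by linarith)
end

section
/- Let ψ : ℝ → ℝ be a convex, L-Lipschitz, even function, and Y a real random variable whose distribution has no atoms. Then R(u) = E[ψ(u − Y)] is convex and differentiable with R'(u) = E[ψ'(u − Y)] (where ψ' is defined Lebesgue-almost-everywhere). Moreover, if Y is symmetric around q (i.e. q − Y has the same distribution as Y − q), then R attains a minimum at q. -/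
/-!
A convex `ψ` has a monotone right derivative and is differentiable wherever that derivative is
continuous, hence off a countable set. Since the law of `Y` has no atoms, `u - Y` almost surely
avoids this set, so differentiation under the integral (dominated by the Lipschitz constant `L`)
gives `R' u = E[ψ'(u - Y)]`. If `q - Y` and `Y - q` have the same law, evenness of `ψ` gives
`R (2q - u) = R u`, and convexity of `R` then puts a minimum at the midpoint `q`.
-/

open MeasureTheory ProbabilityTheory Set Filter Topology

namespace ConvexOn

variable {f : ℝ → ℝ}

theorem rightDeriv_le_slope_le_rightDeriv (hf : ConvexOn ℝ univ f) {x y : ℝ} (hxy : x < y) :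
    derivWithin f (Ioi x) x ≤ slope f x y ∧ slope f x y ≤ derivWithin f (Ioi y) y := by
  have hint : ∀ z, z ∈ interior (univ : Set ℝ) := by simp
  exact ⟨hf.rightDeriv_le_slope_of_mem_interior (hint x) (mem_univ y) hxy,
    (hf.slope_le_leftDeriv_of_mem_interior (mem_univ x) (hint y) hxy).trans
      (hf.leftDeriv_le_rightDeriv_of_mem_interior (hint y))⟩

theorem monotone_rightDeriv (hf : ConvexOn ℝ univ f) :
    Monotone fun x ↦ derivWithin f (Ioi x) x := by
  simpa [interior_univ, monotoneOn_univ] using hf.monotoneOn_rightDeriv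

theorem hasDerivAt_of_continuousAt_rightDeriv (hf : ConvexOn ℝ univ f) {x : ℝ}
    (hc : ContinuousAt (fun y ↦ derivWithin f (Ioi y) y) x) :
    HasDerivAt f (derivWithin f (Ioi x) x) x := by
  set g := fun y ↦ derivWithin f (Ioi y) y
  have hbetween : ∀ y ≠ x, min (g x) (g y) ≤ slope f x y ∧ slope f x y ≤ max (g x) (g y) := by
    intro y hyx
    rcases hyx.lt_or_gt with hyx | hxy
    · obtain ⟨h₁, h₂⟩ := hf.rightDeriv_le_slope_le_rightDeriv hyx
      rw [slope_comm] at h₁ h₂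
      exact ⟨min_le_of_right_le h₁, le_max_of_le_left h₂⟩
    · obtain ⟨h₁, h₂⟩ := hf.rightDeriv_le_slope_le_rightDeriv hxy
      exact ⟨min_le_of_left_le h₁, le_max_of_le_right h₂⟩
  have hg : Tendsto g (𝓝[≠] x) (𝓝 (g x)) := hc.tendsto.mono_left nhdsWithin_le_nhds
  rw [hasDerivAt_iff_tendsto_slope]
  refine tendsto_of_tendsto_of_tendsto_of_le_of_le' ?_ ?_
    (eventually_nhdsWithin_of_forall fun y hy ↦ (hbetween y hy).1)
    (eventually_nhdsWithin_of_forall fun y hy ↦ (hbetween y hy).2)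
  · simpa using (tendsto_const_nhds (x := g x)).min hg
  · simpa using (tendsto_const_nhds (x := g x)).max hg

theorem countable_not_differentiableAt (hf : ConvexOn ℝ univ f) :
    {x | ¬ DifferentiableAt ℝ f x}.Countable :=
  hf.monotone_rightDeriv.countable_not_continuousAt.mono fun _ hx hc ↦
    hx (hf.hasDerivAt_of_continuousAt_rightDeriv hc).differentiableAt

theorem le_of_symmetric_about {E : Type*} [AddCommGroup E] [Module ℝ E] {f : E → ℝ}
    (hf : ConvexOn ℝ univ f) {q : E} (hsymm : ∀ u, f (2 • q - u) = f u) (u : E) :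
    f q ≤ f u :=
  calc f q = f ((1 / 2 : ℝ) • u + (1 / 2 : ℝ) • (2 • q - u)) := by congr 1; module
    _ ≤ (1 / 2 : ℝ) • f u + (1 / 2 : ℝ) • f (2 • q - u) :=
      hf.2 (mem_univ _) (mem_univ _) (by norm_num) (by norm_num) (by norm_num)
    _ = f u := by rw [hsymm, smul_eq_mul]; ring

end ConvexOn

section Integrals

variable {Ω : Type*} [MeasurableSpace Ω] {μ : Measure Ω}

theorem ae_notMem_of_countable_of_noAtoms {α : Type*} {X : Ω → α}
    (hX : ∀ x, μ (X ⁻¹' {x}) = 0) {S : Set α} (hS : S.Countable) : ∀ᵐ ω ∂μ, X ω ∉ S := by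
  have : μ (X ⁻¹' S) = 0 := by
    rw [← biUnion_preimage_singleton]
    exact (measure_biUnion_null_iff hS).2 fun x _ ↦ hX x
  exact measure_eq_zero_iff_ae_notMem.1 this

theorem LipschitzWith.integrable_comp [IsFiniteMeasure μ] {E F : Type*} [NormedAddCommGroup E]
    [NormedAddCommGroup F] {K : NNReal} {g : E → F} (hg : LipschitzWith K g) {X : Ω → E}
    (hX : Integrable X μ) : Integrable (fun ω ↦ g (X ω)) μ := by
  refine ((integrable_const ‖g 0‖).add (hX.norm.const_mul K)).mono'
    (hg.continuous.comp_aestronglyMeasurable hX.1) (ae_of_all _ fun ω ↦ ?_)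
  calc ‖g (X ω)‖ ≤ ‖g 0‖ + ‖g (X ω) - g 0‖ := norm_le_insert' _ _
    _ ≤ ‖g 0‖ + K * ‖X ω‖ := by simpa using hg.norm_sub_le (X ω) 0

theorem convexOn_integral {E : Type*} [AddCommGroup E] [Module ℝ E] {s : Set E}
    {F : E → Ω → ℝ} (hs : Convex ℝ s) (hF : ∀ ω, ConvexOn ℝ s (F · ω))
    (hint : ∀ x ∈ s, Integrable (F x) μ) : ConvexOn ℝ s fun x ↦ ∫ ω, F x ω ∂μ := by
  refine ⟨hs, fun x hx y hy a b ha hb hab ↦ ?_⟩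
  have hxy := hs hx hy ha hb hab
  have hax := (hint x hx).const_mul a
  have hby := (hint y hy).const_mul b
  calc ∫ ω, F (a • x + b • y) ω ∂μ ≤ ∫ ω, (a * F x ω + b * F y ω) ∂μ :=
        integral_mono (hint _ hxy) (hax.add hby) fun ω ↦ (hF ω).2 hx hy ha hb hab
    _ = a * ∫ ω, F x ω ∂μ + b * ∫ ω, F y ω ∂μ := by
        rw [integral_add hax hby, integral_const_mul, integral_const_mul]

end Integrals

section Risk

variable {Ω : Type*} [MeasurableSpace Ω] {μ : Measure Ω} {ψ : ℝ → ℝ} {Y : Ω → ℝ}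

theorem hasDerivAt_integral_comp_sub [IsFiniteMeasure μ] {L : NNReal}
    (hconv : ConvexOn ℝ univ ψ) (hlip : LipschitzWith L ψ) (hY : AEMeasurable Y μ)
    (hNoAtom : ∀ y, μ (Y ⁻¹' {y}) = 0) {u : ℝ} (hint : Integrable (fun ω ↦ ψ (u - Y ω)) μ) :
    HasDerivAt (fun x ↦ ∫ ω, ψ (x - Y ω) ∂μ) (∫ ω, deriv ψ (u - Y ω) ∂μ) u := by
  have hdiff : ∀ᵐ ω ∂μ, DifferentiableAt ℝ ψ (u - Y ω) := by
    filter_upwards [ae_notMem_of_countable_of_noAtoms hNoAtom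
      (hconv.countable_not_differentiableAt.image (u - ·))] with ω hω
    by_contra h
    exact hω ⟨u - Y ω, h, sub_sub_cancel u (Y ω)⟩
  have hlip_shift : ∀ c, LipschitzOnWith (Real.nnabs L) (fun x ↦ ψ (x - c)) univ := fun c ↦ by
    rw [Real.nnabs_coe, lipschitzOnWith_univ]
    exact LipschitzWith.of_dist_le_mul fun x y ↦ by
      simpa only [dist_sub_right] using hlip.dist_le_mul (x - c) (y - c)
  exact (hasDerivAt_integral_of_dominated_loc_of_lip (F := fun x ω ↦ ψ (x - Y ω))
    (F' := fun ω ↦ deriv ψ (u - Y ω)) (bound := fun _ ↦ (L : ℝ)) univ_mem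
    (Eventually.of_forall fun x ↦ hlip.continuous.comp_aestronglyMeasurable
      (aestronglyMeasurable_const.sub hY.aestronglyMeasurable))
    hint
    ((measurable_deriv ψ).comp_aemeasurable (aemeasurable_const.sub hY)).aestronglyMeasurable
    (ae_of_all _ fun ω ↦ hlip_shift (Y ω)) (integrable_const _)
    (hdiff.mono fun ω h ↦ h.hasDerivAt.comp_sub_const u (Y ω))).2

theorem integral_comp_reflect_sub_eq (hψ : Measurable ψ) (hψeven : ∀ z, ψ (-z) = ψ z)
    (hY : AEMeasurable Y μ) {q : ℝ}
    (hsymm : μ.map (fun ω ↦ q - Y ω) = μ.map (fun ω ↦ Y ω - q)) (u : ℝ) :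
    ∫ ω, ψ (2 • q - u - Y ω) ∂μ = ∫ ω, ψ (u - Y ω) ∂μ := by
  have hident : IdentDistrib (fun ω ↦ q - Y ω) (fun ω ↦ Y ω - q) μ μ :=
    ⟨aemeasurable_const.sub hY, hY.sub_const q, hsymm⟩
  calc ∫ ω, ψ (2 • q - u - Y ω) ∂μ = ∫ ω, ψ (u - q + (Y ω - q)) ∂μ := by
        congr with ω
        rw [← hψeven]
        congr 1
        ring
    _ = ∫ ω, ψ (u - q + (q - Y ω)) ∂μ :=
        (hident.comp (hψ.comp (measurable_const_add (u - q)))).integral_eq.symm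
    _ = ∫ ω, ψ (u - Y ω) ∂μ := by simp

end Risk

theorem stmt_11_general {Ω : Type*} [MeasurableSpace Ω] (μ : Measure Ω) [IsProbabilityMeasure μ]
    (ψ : ℝ → ℝ) (L : NNReal) (hψconv : ConvexOn ℝ Set.univ ψ)
    (hψlip : LipschitzWith L ψ) (hψeven : ∀ z, ψ (-z) = ψ z)
    (Y : Ω → ℝ) (hYint : Integrable Y μ)
    (hNoAtom : ∀ y : ℝ, μ (Y ⁻¹' {y}) = 0)
    (R : ℝ → ℝ) (hR : ∀ u, R u = ∫ ω, ψ (u - Y ω) ∂μ) :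
    ConvexOn ℝ Set.univ R ∧
      (∀ u, HasDerivAt R (∫ ω, deriv ψ (u - Y ω) ∂μ) u) ∧
      (∀ q : ℝ, Measure.map (fun ω => q - Y ω) μ = Measure.map (fun ω => Y ω - q) μ →
        ∀ u, R q ≤ R u) := by
  obtain rfl : R = fun u ↦ ∫ ω, ψ (u - Y ω) ∂μ := funext hR
  have hint : ∀ u, Integrable (fun ω ↦ ψ (u - Y ω)) μ := fun u ↦
    hψlip.integrable_comp ((integrable_const u).sub hYint)
  have hconv : ConvexOn ℝ univ fun u ↦ ∫ ω, ψ (u - Y ω) ∂μ :=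
    convexOn_integral convex_univ
      (fun ω ↦ by simpa [sub_eq_neg_add, Function.comp_def] using hψconv.translate_right (-Y ω))
      fun u _ ↦ hint u
  refine ⟨hconv, fun u ↦ ?_, fun q hsymm ↦ ?_⟩
  · exact hasDerivAt_integral_comp_sub hψconv hψlip hYint.aemeasurable hNoAtom (hint u)
  · exact hconv.le_of_symmetric_about
      (integral_comp_reflect_sub_eq hψlip.continuous.measurable hψeven hYint.aemeasurable hsymm)

/-- Lemma (risk_deriv): if `ψ` is convex, Lipschitz and even, and `Y` has a non-atomic
law, then `R u = E[ψ(u - Y)]` is convex and differentiable with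
`R'(u) = E[ψ'(u - Y)]`; moreover if `q - Y ∼ Y - q` then `R` attains a minimum at `q`. -/
theorem stmt_11 {Ω : Type*} [MeasurableSpace Ω] (μ : Measure Ω) [IsProbabilityMeasure μ]
    (ψ : ℝ → ℝ) (L : NNReal) (hψconv : ConvexOn ℝ Set.univ ψ)
    (hψlip : LipschitzWith L ψ) (hψeven : ∀ z, ψ (-z) = ψ z)
    (Y : Ω → ℝ) (hY : Measurable Y) (hYint : Integrable Y μ)
    (hNoAtom : ∀ y : ℝ, μ (Y ⁻¹' {y}) = 0)
    (R : ℝ → ℝ) (hR : ∀ u, R u = ∫ ω, ψ (u - Y ω) ∂μ) :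
    ConvexOn ℝ Set.univ R ∧
      (∀ u, HasDerivAt R (∫ ω, deriv ψ (u - Y ω) ∂μ) u) ∧
      (∀ q : ℝ, Measure.map (fun ω => q - Y ω) μ = Measure.map (fun ω => Y ω - q) μ →
        ∀ u, R q ≤ R u) :=
  stmt_11_general μ ψ L hψconv hψlip hψeven Y hYint hNoAtom R hR
end

section
/- Margin assumption implies variance bound: suppose P(|2η(X) − 1| ≤ h) ≤ r·h^β for all h > 0, with r ≥ 1, β ≥ 0. Then for every classifier t : X → {0,1}, E[|t(X) − s(X)|] ≤ ((β+1)/β^{β/(β+1)}) · r^{1/(β+1)} · ℓ(s,t)^{β/(β+1)} ≤ 2 r^{1/(β+1)} ℓ(s,t)^{β/(β+1)}, where s is the Bayes classifier and ℓ(s,t) is the 0–1 excess risk. -/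
/-!
On `{|2η - 1| ≤ h}` we bound `|t - s| ≤ 1`, and the margin condition bounds the mass of this set
by `r h^β`; off it, `|t - s| ≤ |2η - 1| |t - s| / h`. Hence `E|t - s| ≤ r h^β + ℓ / h` for every
`h > 0`. Minimizing over `h` gives the constant `(β + 1) / β^(β/(β+1))`, and weighted AM-GM
applied to `(1/β)^(β/(β+1)) · 1^(1/(β+1))` bounds it by `2`.
-/

open MeasureTheory Filter Topology Real

theorem integral_le_measureReal_add_integral_mul_div {α : Type*} [MeasurableSpace α]
    {μ : Measure α} [IsFiniteMeasure μ] {g m : α → ℝ} (hg₀ : ∀ x, 0 ≤ g x) (hg₁ : ∀ x, g x ≤ 1)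
    (hm₀ : ∀ x, 0 ≤ m x) (hm : Measurable m) (hg : Integrable g μ)
    (hmg : Integrable (fun x => m x * g x) μ)
    {h : ℝ} (hh : 0 < h) :
    ∫ x, g x ∂μ ≤ μ.real {x | m x ≤ h} + (∫ x, m x * g x ∂μ) / h := by
  set A := {x | m x ≤ h}
  have hA : Integrable (A.indicator (1 : α → ℝ)) μ :=
    (integrable_const (1 : ℝ)).indicator (measurableSet_le hm measurable_const)
  have hpt : ∀ x, g x ≤ A.indicator 1 x + m x * g x / h := by
    intro x
    by_cases hx : x ∈ A
    · rw [Set.indicator_of_mem hx, Pi.one_apply]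
      have : 0 ≤ m x * g x / h := div_nonneg (mul_nonneg (hm₀ x) (hg₀ x)) hh.le
      linarith [hg₁ x]
    · rw [Set.indicator_of_notMem hx, zero_add, le_div_iff₀ hh]
      nlinarith [hg₀ x, show h < m x from not_le.1 hx]
  calc ∫ x, g x ∂μ ≤ ∫ x, (A.indicator 1 x + m x * g x / h) ∂μ :=
        integral_mono hg (by exact hA.add (hmg.div_const h)) hpt
    _ = μ.real A + (∫ x, m x * g x ∂μ) / h := by
        rw [integral_add hA (hmg.div_const h), integral_div,
          integral_indicator_one (measurableSet_le hm measurable_const)]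

theorem mul_rpow_add_div_eq_of_rpow_eq {r β ℓ u : ℝ} (hr : 0 < r) (hβ : 0 < β) (hu : 0 < u)
    (hℓ : ℓ = r * β * u ^ (β + 1)) :
    r * u ^ β + ℓ / u = (β + 1) / β ^ (β / (β + 1)) * r ^ (1 / (β + 1)) * ℓ ^ (β / (β + 1)) := by
  have hp : β + 1 ≠ 0 := by positivity
  have hℓpow : ℓ ^ (β / (β + 1)) = r ^ (β / (β + 1)) * β ^ (β / (β + 1)) * u ^ β := by
    rw [hℓ, mul_rpow (by positivity) (by positivity), mul_rpow hr.le hβ.le, ← rpow_mul hu.le,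
      mul_div_cancel₀ β hp]
  have hr_split : r ^ (1 / (β + 1)) * r ^ (β / (β + 1)) = r := by
    rw [← rpow_add hr, ← add_div, add_comm, div_self hp, rpow_one]
  rw [hℓpow, hℓ, rpow_add_one hu.ne']
  field_simp
  rw [mul_assoc, hr_split]
  ring

theorem le_mul_rpow_mul_rpow_of_forall_le_mul_rpow_add_div {D r β ℓ : ℝ} (hr : 0 < r)
    (hβ : 0 ≤ β) (hℓ : 0 ≤ ℓ) (hD : ∀ h : ℝ, 0 < h → D ≤ r * h ^ β + ℓ / h) :
    D ≤ (β + 1) / β ^ (β / (β + 1)) * r ^ (1 / (β + 1)) * ℓ ^ (β / (β + 1)) := by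
  rcases hβ.eq_or_lt with rfl | hβ
  · have hlim : Tendsto (fun h : ℝ => r * h ^ (0 : ℝ) + ℓ / h) atTop (𝓝 (r + 0)) := by
      simpa using tendsto_const_nhds.add (tendsto_const_nhds.div_atTop (tendsto_id (α := ℝ)))
    simpa using ge_of_tendsto hlim ((eventually_gt_atTop 0).mono hD)
  rcases hℓ.eq_or_lt with rfl | hℓ
  · have hlim : Tendsto (fun h : ℝ => r * h ^ β + 0 / h) (𝓝[>] 0) (𝓝 (r * 0 ^ β + 0)) := by
      simpa using (((continuousAt_rpow_const 0 β (Or.inr hβ.le)).tendsto.const_mul r).mono_left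
        nhdsWithin_le_nhds)
    simpa [zero_rpow hβ.ne', zero_rpow (div_pos hβ (by linarith : (0 : ℝ) < β + 1)).ne'] using
      ge_of_tendsto hlim (eventually_mem_nhdsWithin.mono hD)
  -- the minimizer of `h ↦ r h^β + ℓ / h`, where `r β h^(β+1) = ℓ`
  set u := (ℓ / (r * β)) ^ (β + 1)⁻¹
  have hu : 0 < u := by positivity
  refine (hD u hu).trans_eq (mul_rpow_add_div_eq_of_rpow_eq hr hβ hu ?_)
  rw [rpow_inv_rpow (by positivity) (by positivity)]
  field_simp

theorem add_one_div_rpow_le_two {β : ℝ} (hβ : 0 ≤ β) : (β + 1) / β ^ (β / (β + 1)) ≤ 2 := by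
  have hp : 0 < β + 1 := by linarith
  have hamgm := geom_mean_le_arith_mean2_weighted (div_nonneg hβ hp.le)
    (by positivity : 0 ≤ 1 / (β + 1)) (inv_nonneg.2 hβ) zero_le_one (by field_simp)
  rw [one_rpow, mul_one, inv_rpow hβ] at hamgm
  calc (β + 1) / β ^ (β / (β + 1)) = (β + 1) * (β ^ (β / (β + 1)))⁻¹ := div_eq_mul_inv _ _
    _ ≤ (β + 1) * (β / (β + 1) * β⁻¹ + 1 / (β + 1) * 1) := by gcongr
    _ ≤ 2 := by
        rcases hβ.eq_or_lt with rfl | hβ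
        · norm_num
        · field_simp; linarith

theorem stmt_13_general {α : Type*} [MeasurableSpace α] (μ : Measure α) [IsProbabilityMeasure μ]
    (η : α → ℝ) (hηm : Measurable η) (hη : ∀ x, η x ∈ Set.Icc (0 : ℝ) 1)
    (s : α → Bool) (hsm : Measurable s)
    (r β : ℝ) (hr : 1 ≤ r) (hβ : 0 ≤ β)
    (hmargin : ∀ h : ℝ, 0 < h → (μ {x | |2 * η x - 1| ≤ h}).toReal ≤ r * h ^ β)
    (t : α → Bool) (ht : Measurable t)
    (ℓ : ℝ)
    (hℓ : ℓ = ∫ x, |2 * η x - 1| * |(if t x then (1 : ℝ) else 0) - (if s x then 1 else 0)| ∂μ) :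
    (∫ x, |(if t x then (1 : ℝ) else 0) - (if s x then 1 else 0)| ∂μ)
        ≤ ((β + 1) / β ^ (β / (β + 1))) * r ^ (1 / (β + 1)) * ℓ ^ (β / (β + 1)) ∧
      ((β + 1) / β ^ (β / (β + 1))) * r ^ (1 / (β + 1)) * ℓ ^ (β / (β + 1))
        ≤ 2 * r ^ (1 / (β + 1)) * ℓ ^ (β / (β + 1)) := by
  set g : α → ℝ := fun x => |(if t x then (1 : ℝ) else 0) - (if s x then 1 else 0)|
  set m : α → ℝ := fun x => |2 * η x - 1|
  have hg₀ (x : α) : 0 ≤ g x := abs_nonneg _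
  have hg₁ (x : α) : g x ≤ 1 := by simp only [g]; cases t x <;> cases s x <;> norm_num
  have hm₀ (x : α) : 0 ≤ m x := abs_nonneg _
  have hm₁ (x : α) : m x ≤ 1 := abs_le.2 ⟨by linarith [(hη x).1], by linarith [(hη x).2]⟩
  have hmm : Measurable m := by fun_prop
  have hgm : Measurable g := by
    have hind : Measurable fun b : Bool => if b then (1 : ℝ) else 0 := measurable_from_top
    exact ((hind.comp ht).sub (hind.comp hsm)).abs
  have hg : Integrable g μ := .of_bound hgm.aestronglyMeasurable 1 <| ae_of_all _ fun x => by
    rw [norm_of_nonneg (hg₀ x)]; exact hg₁ x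
  have hmg : Integrable (fun x => m x * g x) μ := .of_bound
      (hmm.mul hgm).aestronglyMeasurable 1 <| ae_of_all _ fun x => by
    rw [norm_of_nonneg (mul_nonneg (hm₀ x) (hg₀ x))]; exact mul_le_one₀ (hm₁ x) (hg₀ x) (hg₁ x)
  have hbound (h : ℝ) (hh : 0 < h) : ∫ x, g x ∂μ ≤ r * h ^ β + ℓ / h := by
    refine (integral_le_measureReal_add_integral_mul_div hg₀ hg₁ hm₀ hmm hg hmg hh).trans ?_
    rw [measureReal_def, ← hℓ]
    gcongr
    exact hmargin h hh
  have hℓ₀ : 0 ≤ ℓ := hℓ ▸ integral_nonneg fun x => mul_nonneg (hm₀ x) (hg₀ x)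
  refine ⟨le_mul_rpow_mul_rpow_of_forall_le_mul_rpow_add_div (by linarith) hβ hℓ₀ hbound, ?_⟩
  have hr₀ : 0 ≤ r := by linarith
  gcongr
  exact add_one_div_rpow_le_two hβ

/-- Margin assumption implies a variance bound: under Tsybakov's condition
`P(|2η(X) - 1| ≤ h) ≤ r h^β` for all `h > 0` (with `r ≥ 1`, `β ≥ 0`), any classifier `t`
satisfies `E[|t(X) - s(X)|] ≤ ((β+1)/β^{β/(β+1)}) r^{1/(β+1)} ℓ^{β/(β+1)}
≤ 2 r^{1/(β+1)} ℓ^{β/(β+1)}`, where `s` is the Bayes classifier and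
`ℓ = E[|2η(X)-1| |t(X)-s(X)|]` is the 0-1 excess risk. -/
theorem stmt_13 {α : Type*} [MeasurableSpace α] (μ : Measure α) [IsProbabilityMeasure μ]
    (η : α → ℝ) (hηm : Measurable η) (hη : ∀ x, η x ∈ Set.Icc (0 : ℝ) 1)
    (s : α → Bool) (hs : ∀ x, s x = true ↔ 1 / 2 ≤ η x) (hsm : Measurable s)
    (r β : ℝ) (hr : 1 ≤ r) (hβ : 0 ≤ β)
    (hmargin : ∀ h : ℝ, 0 < h → (μ {x | |2 * η x - 1| ≤ h}).toReal ≤ r * h ^ β)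
    (t : α → Bool) (ht : Measurable t)
    (ℓ : ℝ)
    (hℓ : ℓ = ∫ x, |2 * η x - 1| * |(if t x then (1 : ℝ) else 0) - (if s x then 1 else 0)| ∂μ) :
    (∫ x, |(if t x then (1 : ℝ) else 0) - (if s x then 1 else 0)| ∂μ)
        ≤ ((β + 1) / β ^ (β / (β + 1))) * r ^ (1 / (β + 1)) * ℓ ^ (β / (β + 1)) ∧
      ((β + 1) / β ^ (β / (β + 1))) * r ^ (1 / (β + 1)) * ℓ ^ (β / (β + 1))
        ≤ 2 * r ^ (1 / (β + 1)) * ℓ ^ (β / (β + 1)) :=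
  stmt_13_general μ η hηm hη s hsm r β hr hβ hmargin t ht ℓ hℓ
end

section
/- Majority vote excess risk bound: let Y = {0,…,M−1} be a finite label set with M classes, (f_i)_{1≤i≤V} classifiers X → Y, and f^mv a majority-vote classifier: for all x, f^mv(x) maximizes over y ∈ Y the count |{i : f_i(x) = y}|. Then the 0–1 excess risk satisfies ℓ(s, f^mv) ≤ (M/V) · Σ_{i=1}^V ℓ(s, f_i), where s is a Bayes classifier. -/
open MeasureTheory

/-! At each point `x` the majority label collects at least `V/M` of the `V` votes, and every
vote has nonnegative pointwise regret `η_{s(x)}(x) - η_{f_i(x)}(x)`; so the regret of the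
majority vote is at most `M/V` times the summed regrets of the voters. Integrating this
pointwise bound gives the theorem. -/

section MajorityVote

open Finset

variable {ι β : Type*} [Fintype ι] [Fintype β] [DecidableEq β]

theorem card_le_card_mul_card_fiber_of_isMajority (f : ι → β) (b : β)
    (hb : ∀ y, #{i | f i = y} ≤ #{i | f i = b}) :
    Fintype.card ι ≤ Fintype.card β * #{i | f i = b} :=
  calc Fintype.card ι = ∑ y, #{i | f i = y} :=
        card_eq_sum_card_fiberwise fun i _ => mem_univ (f i)
    _ ≤ ∑ _y : β, #{i | f i = b} := sum_le_sum fun y _ => hb y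
    _ = Fintype.card β * #{i | f i = b} := by simp

theorem card_mul_le_card_mul_sum_of_isMajority (f : ι → β) (b : β)
    (hb : ∀ y, #{i | f i = y} ≤ #{i | f i = b}) (g : β → ℝ) (hg : ∀ y, 0 ≤ g y) :
    Fintype.card ι * g b ≤ Fintype.card β * ∑ i, g (f i) := by
  have hfiber : ∑ i ∈ {i | f i = b}, g (f i) = #{i | f i = b} * g b := by
    rw [sum_congr rfl fun i hi => by rw [(mem_filter.1 hi).2],
      sum_const, nsmul_eq_mul]
  have hcard : (Fintype.card ι : ℝ) ≤ Fintype.card β * #{i | f i = b} := by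
    exact_mod_cast card_le_card_mul_card_fiber_of_isMajority f b hb
  calc (Fintype.card ι : ℝ) * g b ≤ Fintype.card β * #{i | f i = b} * g b :=
        mul_le_mul_of_nonneg_right hcard (hg b)
    _ = Fintype.card β * ∑ i ∈ {i | f i = b}, g (f i) := by rw [hfiber, mul_assoc]
    _ ≤ Fintype.card β * ∑ i, g (f i) := by
        gcongr
        · exact fun i _ _ => hg (f i)
        · exact subset_univ _

end MajorityVote

section Regret

variable {α β : Type*} [MeasurableSpace α] [MeasurableSpace β] [Countable β]
  [MeasurableSingletonClass β] {η : β → α → ℝ}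

theorem measurable_apply_self (hη : ∀ y, Measurable (η y)) {t : α → β} (ht : Measurable t) :
    Measurable fun x => η (t x) x :=
  (measurable_from_prod_countable_right (f := fun p : β × α => η p.1 p.2) hη).comp
    (ht.prodMk measurable_id)

theorem integrable_apply_sub_apply (μ : Measure α) [IsFiniteMeasure μ]
    (hηm : ∀ y, Measurable (η y)) (hη : ∀ y x, η y x ∈ Set.Icc (0 : ℝ) 1)
    {s t : α → β} (hs : Measurable s) (ht : Measurable t) :
    Integrable (fun x => η (s x) x - η (t x) x) μ := by
  refine Integrable.of_bound
    ((measurable_apply_self hηm hs).sub (measurable_apply_self hηm ht)).aestronglyMeasurable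
    1 (ae_of_all _ fun x => ?_)
  obtain ⟨hs0, hs1⟩ := hη (s x) x
  obtain ⟨ht0, ht1⟩ := hη (t x) x
  rw [Real.norm_eq_abs, abs_le]
  constructor <;> linarith

end Regret

theorem stmt_14_general {α : Type*} [MeasurableSpace α] (μ : Measure α) [IsProbabilityMeasure μ]
    (M V : ℕ) (hV : 0 < V)
    (η : Fin M → α → ℝ) (hηm : ∀ y, Measurable (η y))
    (hη : ∀ y x, η y x ∈ Set.Icc (0 : ℝ) 1)
    (s : α → Fin M) (hsm : Measurable s) (hbayes : ∀ x y, η y x ≤ η (s x) x)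
    (f : Fin V → α → Fin M) (hfm : ∀ i, Measurable (f i))
    (fmv : α → Fin M)
    (hmv : ∀ x y, (Finset.univ.filter fun i => f i x = y).card ≤
      (Finset.univ.filter fun i => f i x = fmv x).card)
    (excess : (α → Fin M) → ℝ)
    (hexcess : ∀ t : α → Fin M, excess t = ∫ x, (η (s x) x - η (t x) x) ∂μ) :
    excess fmv ≤ ((M : ℝ) / V) * ∑ i, excess (f i) := by
  have hint i := integrable_apply_sub_apply μ hηm hη hsm (hfm i)
  have hpointwise x : η (s x) x - η (fmv x) x ≤
      (M : ℝ) / V * ∑ i, (η (s x) x - η (f i x) x) := by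
    have h := card_mul_le_card_mul_sum_of_isMajority (fun i => f i x) (fmv x) (hmv x)
      (fun y => η (s x) x - η y x) fun y => sub_nonneg.2 (hbayes x y)
    simp only [Fintype.card_fin] at h
    rw [div_mul_eq_mul_div, le_div_iff₀ (by exact_mod_cast hV), mul_comm]
    exact h
  calc excess fmv = ∫ x, (η (s x) x - η (fmv x) x) ∂μ := hexcess fmv
    _ ≤ ∫ x, (M : ℝ) / V * ∑ i, (η (s x) x - η (f i x) x) ∂μ :=
        integral_mono_of_nonneg (ae_of_all _ fun x => sub_nonneg.2 (hbayes x _))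
          ((integrable_finsetSum _ fun i _ => hint i).const_mul _) (ae_of_all _ hpointwise)
    _ = (M : ℝ) / V * ∑ i, excess (f i) := by
        rw [integral_const_mul, integral_finsetSum _ fun i _ => hint i]
        simp only [hexcess]

/-- Proposition (maj_vote), excess risk: with `M` classes, conditional probabilities
`η y x = P(Y = y | X = x)`, Bayes classifier `s`, classifiers `f₁,…,f_V` and a majority
vote `fmv`, the 0-1 excess risk `ℓ t = E[η_{s(X)}(X) - η_{t(X)}(X)]` satisfies
`ℓ fmv ≤ (M/V) ∑ᵢ ℓ (fᵢ)`. -/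
theorem stmt_14 {α : Type*} [MeasurableSpace α] (μ : Measure α) [IsProbabilityMeasure μ]
    (M V : ℕ) (hM : 0 < M) (hV : 0 < V)
    (η : Fin M → α → ℝ) (hηm : ∀ y, Measurable (η y))
    (hη : ∀ y x, η y x ∈ Set.Icc (0 : ℝ) 1)
    (hηsum : ∀ x, ∑ y, η y x = 1)
    (s : α → Fin M) (hsm : Measurable s) (hbayes : ∀ x y, η y x ≤ η (s x) x)
    (f : Fin V → α → Fin M) (hfm : ∀ i, Measurable (f i))
    (fmv : α → Fin M) (hfmvm : Measurable fmv)
    (hmv : ∀ x y, (Finset.univ.filter fun i => f i x = y).card ≤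
      (Finset.univ.filter fun i => f i x = fmv x).card)
    (excess : (α → Fin M) → ℝ)
    (hexcess : ∀ t : α → Fin M, excess t = ∫ x, (η (s x) x - η (t x) x) ∂μ) :
    excess fmv ≤ ((M : ℝ) / V) * ∑ i, excess (f i) :=
  stmt_14_general μ M V hV η hηm hη s hsm hbayes f hfm fmv hmv excess hexcess
end

section
/- Oracle selection lemma: let M be a finite index set, (t_m)_{m∈M} elements with excess risks ℓ(s,t_m) ≥ 0 and empirical risks P_n γ(t_m). Suppose there is p ∈ [0, 1/|M|) and R : (0,1] → ℝ≥0 such that for each pair (m,m') ∈ M², with probability at least 1 − p, for all θ ∈ (0,1]: (P_n − P)(γ(t_m) − γ(t_{m'})) ≤ θ·ℓ(s,t_m) + θ·ℓ(s,t_{m'}) + R(θ). Then for m̂ minimizing P_n γ(t_m) over M, with probability at least 1 − |M|·p, for all θ ∈ (0,1]: (1−θ)·ℓ(s,t_m̂) ≤ (1+θ)·min_{m∈M} ℓ(s,t_m) + R(θ). -/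
open MeasureTheory ENNReal

/-- Lemma (min_lemm, oracle selection): let `(t_m)_{m ∈ M}` have nonnegative excess
risks `ℓ m` and empirical risks `emp m ω`, so that
`(P_n - P)(γ t_m - γ t_{m'}) = (emp m ω - emp m' ω) - (ℓ m - ℓ m')`. If for every pair
`(m, m')`, with probability at least `1 - p` (i.e. the bad event has probability at most
`p`), for all `θ ∈ (0,1]` the deviation is at most `θ ℓ m + θ ℓ m' + R θ`, then for any
empirical risk minimizer `m̂`, with probability at least `1 - |M| p`, for all
`θ ∈ (0,1]`: `(1-θ) ℓ (m̂) ≤ (1+θ) min_m ℓ m + R θ`. -/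
theorem stmt_16 {Ω ι : Type*} [MeasurableSpace Ω] [Fintype ι] [Nonempty ι]
    (μ : Measure Ω) [IsProbabilityMeasure μ]
    (ℓ : ι → ℝ) (hℓ : ∀ m, 0 ≤ ℓ m)
    (emp : ι → Ω → ℝ)
    (p : ℝ) (hp0 : 0 ≤ p) (hp1 : p < 1 / (Fintype.card ι))
    (R : ℝ → ℝ) (hR : ∀ θ ∈ Set.Ioc (0 : ℝ) 1, 0 ≤ R θ)
    (hdev : ∀ m m' : ι,
      μ {ω | ¬ ∀ θ ∈ Set.Ioc (0 : ℝ) 1,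
          (emp m ω - emp m' ω) - (ℓ m - ℓ m') ≤ θ * ℓ m + θ * ℓ m' + R θ}
        ≤ ENNReal.ofReal p)
    (mhat : Ω → ι) (hmhat : ∀ (ω : Ω) (m : ι), emp (mhat ω) ω ≤ emp m ω) :
    ENNReal.ofReal (1 - (Fintype.card ι : ℝ) * p) ≤
      μ {ω | ∀ θ ∈ Set.Ioc (0 : ℝ) 1,
        (1 - θ) * ℓ (mhat ω) ≤ (1 + θ) * (⨅ m, ℓ m) + R θ} := by
  obtain ⟨ms, hms⟩ := Finite.exists_min ℓ
  have hinf : (⨅ m, ℓ m) = ℓ ms :=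
    le_antisymm (ciInf_le (Finite.bddBelow_range ℓ) ms) (le_ciInf hms)
  set B : Set Ω := ⋃ m, {ω | ¬ ∀ θ ∈ Set.Ioc (0 : ℝ) 1,
      (emp ms ω - emp m ω) - (ℓ ms - ℓ m) ≤ θ * ℓ ms + θ * ℓ m + R θ} with hBdef
  have hB : μ B ≤ (Fintype.card ι : ℝ≥0∞) * ENNReal.ofReal p := by
    refine le_trans (measure_iUnion_fintype_le μ _) ?_
    calc ∑ m, μ {ω | ¬ ∀ θ ∈ Set.Ioc (0 : ℝ) 1,
          (emp ms ω - emp m ω) - (ℓ ms - ℓ m) ≤ θ * ℓ ms + θ * ℓ m + R θ}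
        ≤ ∑ _m : ι, ENNReal.ofReal p := Finset.sum_le_sum (fun m _ => hdev ms m)
      _ = (Fintype.card ι : ℝ≥0∞) * ENNReal.ofReal p := by
          simp [Finset.sum_const, nsmul_eq_mul]
  have hsub : Bᶜ ⊆ {ω | ∀ θ ∈ Set.Ioc (0 : ℝ) 1,
      (1 - θ) * ℓ (mhat ω) ≤ (1 + θ) * (⨅ m, ℓ m) + R θ} := by
    intro ω hω θ hθ
    rw [hinf]
    simp only [hBdef, Set.compl_iUnion, Set.mem_iInter, Set.mem_compl_iff,
      Set.mem_setOf_eq, not_not] at hω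
    have h1 := hω (mhat ω) θ hθ
    have h2 := hmhat ω ms
    nlinarith [hℓ ms, hℓ (mhat ω), hθ.1.le]
  have h1 : (1 : ℝ≥0∞) ≤ μ Bᶜ + μ B := by
    calc (1 : ℝ≥0∞) = μ Set.univ := (measure_univ).symm
      _ = μ (Bᶜ ∪ B) := by rw [Set.compl_union_self]
      _ ≤ μ Bᶜ + μ B := measure_union_le _ _
  calc ENNReal.ofReal (1 - (Fintype.card ι : ℝ) * p)
      = 1 - ENNReal.ofReal ((Fintype.card ι : ℝ) * p) := by
        rw [ENNReal.ofReal_sub _ (by positivity), ENNReal.ofReal_one]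
    _ = 1 - (Fintype.card ι : ℝ≥0∞) * ENNReal.ofReal p := by
        rw [ENNReal.ofReal_mul (by positivity), ENNReal.ofReal_natCast]
    _ ≤ 1 - μ B := tsub_le_tsub_left hB _
    _ ≤ μ Bᶜ := by
        rw [tsub_le_iff_right]; exact h1
    _ ≤ μ _ := measure_mono hsub
end

section
/- Median regression variance bound (Proposition on SC condition): let g(u,y) = |u − y|. Suppose for every x the conditional cdf F_x of Y given X = x is continuous with unique median s(x), and there exist a(x), b(x) > 0 with |F_x(u) − F_x(s(x))| ≥ a(x)·min(|u − s(x)|, b(x)) for all u. Let a_m = inf_x a(x) > 0 and μ_m = inf_x a(x)b(x) > 0. Then for all u, v ∈ ℝ: E[(g(u,Y) − g(v,Y))² | X] ≤ max( 4/a_m, (4/μ_m)·|u − v| ) · ( ℓ_X(u) + ℓ_X(v) ), where ℓ_X(u) = E[g(u,Y)|X] − inf_w E[g(w,Y)|X]. -/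
/-!
Write `F` for the cdf of the conditional law and `m` for its median. Fubini applied to
`|w - y| - |m - y| = ∫ t in m..w, (if y ≤ t then 1 else -1)` shows that the excess risk of `w`
is `∫ t in Ι m w, |2 F t - 1|`. The local increase condition bounds the integrand below by
`2 min (am |t - m|) μm`, a concave function of `|t - m|` which therefore dominates its chord on
`[0, |w - m|]`; integrating the chord, the excess risk of `w` is at least
`|w - m| min (am |w - m|) μm`. Finally `(|u - y| - |v - y|)² ≤ |u - v|²` and, since
`|u - v| ≤ |u - m| + |v - m|`, the larger of `|u - m|` and `|v - m|` is at least `|u - v| / 2`,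
which makes its own excess-risk bound dominate `|u - v|² / max (4 / am) (4 |u - v| / μm)`.
-/

open MeasureTheory ProbabilityTheory Set
open scoped Interval

-- The value `1` at `t = y` makes Fubini produce `ν (Iic t)` below, not `ν (Iio t)`.
theorem intervalIntegral_ite_le_eq_abs_sub_sub_abs_sub (m w y : ℝ) :
    ∫ t in m..w, (if y ≤ t then (1 : ℝ) else -1) = |w - y| - |m - y| := by
  refine integral_eq_of_hasDerivAt_off_countable (fun t => |t - y|) _ (countable_singleton y)
    (continuous_id.sub continuous_const).abs.continuousOn (fun t ht => ?_) ?_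
  · rcases lt_or_gt_of_ne (show t ≠ y from ht.2) with h | h
    · simpa [not_le.mpr h] using (hasDerivAt_abs_neg (sub_neg.mpr h)).comp_sub_const t y
    · simpa [h.le] using (hasDerivAt_abs_pos (sub_pos.mpr h)).comp_sub_const t y
  · refine Monotone.intervalIntegrable fun s t hst => ?_
    split_ifs <;> grind

theorem integral_uIoc_abs_sub (m w : ℝ) : ∫ t in Ι m w, |t - m| = |w - m| ^ 2 / 2 := by
  rcases le_total m w with hmw | hwm
  · rw [uIoc_of_le hmw, ← intervalIntegral.integral_of_le hmw, abs_of_nonneg (sub_nonneg.2 hmw),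
      intervalIntegral.integral_congr fun t ht =>
        abs_of_nonneg (sub_nonneg.2 (uIcc_of_le hmw ▸ ht).1),
      intervalIntegral.integral_sub intervalIntegral.intervalIntegrable_id intervalIntegrable_const]
    simp only [integral_id, intervalIntegral.integral_const, smul_eq_mul]
    ring
  · rw [uIoc_of_ge hwm, ← intervalIntegral.integral_of_le hwm, abs_of_nonpos (sub_nonpos.2 hwm),
      intervalIntegral.integral_congr fun t ht =>
        abs_of_nonpos (sub_nonpos.2 (uIcc_of_le hwm ▸ ht).2),
      intervalIntegral.integral_neg,
      intervalIntegral.integral_sub intervalIntegral.intervalIntegrable_id intervalIntegrable_const]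
    simp only [integral_id, intervalIntegral.integral_const, smul_eq_mul]
    ring

-- Chord bound for the concave function `r ↦ min (a r) μ` on `[0, d]`.
theorem mul_min_mul_le_mul_min_mul {a μ r d : ℝ} (hμ : 0 ≤ μ) (hr : 0 ≤ r)
    (hrd : r ≤ d) :
    r * min (a * d) μ ≤ d * min (a * r) μ := by
  rcases min_cases (a * r) μ with ⟨hmin, -⟩ | ⟨hmin, -⟩ <;> rw [hmin]
  · calc r * min (a * d) μ ≤ r * (a * d) := by gcongr; exact min_le_left _ _
      _ = d * (a * r) := by ring
  · calc r * min (a * d) μ ≤ r * μ := by gcongr; exact min_le_right _ _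
      _ ≤ d * μ := by gcongr

theorem min_mul_le_mul_min {am μm a b r : ℝ} (ham : am ≤ a) (hμm : μm ≤ a * b)
    (hr : 0 ≤ r) :
    min (am * r) μm ≤ a * min r b := by
  rcases min_cases r b with ⟨hmin, -⟩ | ⟨hmin, -⟩ <;> rw [hmin]
  · exact (min_le_left _ _).trans (by gcongr)
  · exact (min_le_right _ _).trans hμm

theorem sq_le_max_mul_mul_min {am μm D r : ℝ} (ham : 0 < am) (hμm : 0 < μm) (hD : 0 ≤ D)
    (hDr : D ≤ 2 * r) : D ^ 2 ≤ max (4 / am) (4 / μm * D) * (r * min (am * r) μm) := by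
  have hr : 0 ≤ r := by linarith
  rcases min_cases (am * r) μm with ⟨hmin, -⟩ | ⟨hmin, -⟩ <;> rw [hmin]
  · calc D ^ 2 ≤ 4 / am * (r * (am * r)) := by field_simp; nlinarith
      _ ≤ _ := by gcongr; exact le_max_left _ _
  · calc D ^ 2 ≤ 4 / μm * D * (r * μm) := by field_simp; nlinarith
      _ ≤ _ := by gcongr; exact le_max_right _ _

theorem sq_le_max_mul_add {am μm D p q : ℝ} (ham : 0 < am) (hμm : 0 < μm) (hD : 0 ≤ D)
    (hp : 0 ≤ p) (hq : 0 ≤ q) (hDpq : D ≤ p + q) :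
    D ^ 2 ≤ max (4 / am) (4 / μm * D) * (p * min (am * p) μm + q * min (am * q) μm) := by
  wlog hqp : q ≤ p generalizing p q
  · rw [add_comm]; exact this hq hp (by linarith) (by linarith)
  calc D ^ 2 ≤ max (4 / am) (4 / μm * D) * (p * min (am * p) μm) :=
        sq_le_max_mul_mul_min ham hμm hD (by linarith)
    _ ≤ _ := by
        gcongr
        exact le_add_of_nonneg_right (mul_nonneg hq (le_min (by positivity) hμm.le))

section ProbabilityMeasure

variable (ν : Measure ℝ) [IsProbabilityMeasure ν]

theorem integral_ite_le_eq_two_mul_cdf_sub_one (t : ℝ) :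
    ∫ y, (if y ≤ t then (1 : ℝ) else -1) ∂ν = 2 * cdf ν t - 1 := by
  have h : (fun y => if y ≤ t then (1 : ℝ) else -1) =
      fun y => 2 * (Iic t).indicator 1 y - 1 := by
    ext y; by_cases hy : y ≤ t <;> norm_num [hy]
  rw [h, integral_sub ((integrable_indicator_iff measurableSet_Iic).2
      (integrable_const 1).integrableOn |>.const_mul 2) (integrable_const 1),
    integral_const_mul, integral_indicator_one measurableSet_Iic, cdf_eq_real]
  simp

theorem integral_abs_sub_sub_abs_sub_eq_intervalIntegral_cdf (m w : ℝ) :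
    ∫ y, (|w - y| - |m - y|) ∂ν = ∫ t in m..w, (2 * cdf ν t - 1) := by
  have : IsFiniteMeasure (volume.restrict (uIoc m w)) := Real.isFiniteMeasure_restrict_Ioc _ _
  have hint : Integrable (Function.uncurry fun t y => if y ≤ t then (1 : ℝ) else -1)
      ((volume.restrict (uIoc m w)).prod ν) := by
    refine Integrable.of_bound (Measurable.ite (measurableSet_le measurable_snd measurable_fst)
      measurable_const measurable_const).aestronglyMeasurable 1 (ae_of_all _ fun p => ?_)
    by_cases hp : p.2 ≤ p.1 <;> simp [Function.uncurry, hp]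
  simp_rw [← intervalIntegral_ite_le_eq_abs_sub_sub_abs_sub,
    ← integral_ite_le_eq_two_mul_cdf_sub_one,
    intervalIntegral_integral_swap hint]

theorem integral_abs_sub_sub_abs_sub_of_cdf_eq_half {m : ℝ} (hm : cdf ν m = 1 / 2) (w : ℝ) :
    ∫ y, (|w - y| - |m - y|) ∂ν = ∫ t in Ι m w, |2 * cdf ν t - 1| := by
  rw [integral_abs_sub_sub_abs_sub_eq_intervalIntegral_cdf]
  rcases le_total m w with hmw | hwm
  · rw [intervalIntegral.integral_of_le hmw, uIoc_of_le hmw]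
    refine setIntegral_congr_fun measurableSet_Ioc fun t ht => (abs_of_nonneg ?_).symm
    linarith [(cdf ν).mono ht.1.le]
  · rw [intervalIntegral.integral_of_ge hwm, uIoc_of_ge hwm, ← integral_neg]
    refine setIntegral_congr_fun measurableSet_Ioc fun t ht => (abs_of_nonpos ?_).symm
    linarith [(cdf ν).mono ht.2]

theorem abs_sub_mul_min_le_integral_abs_sub_sub_abs_sub {m am μm : ℝ} (hμm : 0 ≤ μm)
    (hm : cdf ν m = 1 / 2)
    (hinc : ∀ t, min (am * |t - m|) μm ≤ |cdf ν t - 1 / 2|) (w : ℝ) :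
    |w - m| * min (am * |w - m|) μm ≤ ∫ y, (|w - y| - |m - y|) ∂ν := by
  rcases eq_or_ne w m with rfl | hwm
  · simp
  have hd : 0 < |w - m| := abs_pos.2 (sub_ne_zero.2 hwm)
  set c := min (am * |w - m|) μm
  have hlin : IntegrableOn (fun t => 2 * c / |w - m| * |t - m|) (Ι m w) :=
    (continuous_const.mul (continuous_id.sub continuous_const).abs).intervalIntegrable m w |>.def'
  have hcdf : Monotone fun t => 2 * cdf ν t - 1 := fun s t hst =>
    sub_le_sub_right (mul_le_mul_of_nonneg_left ((cdf ν).mono hst) zero_le_two) 1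
  have hbound : ∀ t ∈ Ι m w, 2 * c / |w - m| * |t - m| ≤ |2 * cdf ν t - 1| := by
    intro t ht
    have hconc := mul_min_mul_le_mul_min_mul (a := am) hμm (abs_nonneg (t - m))
      (abs_sub_left_of_mem_uIcc (uIoc_subset_uIcc ht))
    calc 2 * c / |w - m| * |t - m| = 2 * (|t - m| * c) / |w - m| := by ring
      _ ≤ 2 * min (am * |t - m|) μm := by
        rw [div_le_iff₀ hd]; linarith
      _ ≤ |2 * cdf ν t - 1| := by
        rw [show 2 * cdf ν t - 1 = 2 * (cdf ν t - 1 / 2) by ring, abs_mul, abs_two]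
        gcongr; exact hinc t
  rw [integral_abs_sub_sub_abs_sub_of_cdf_eq_half ν hm]
  calc |w - m| * c = 2 * c / |w - m| * ∫ t in Ι m w, |t - m| := by
        rw [integral_uIoc_abs_sub]; field_simp
    _ = ∫ t in Ι m w, 2 * c / |w - m| * |t - m| := (integral_const_mul _ _).symm
    _ ≤ ∫ t in Ι m w, |2 * cdf ν t - 1| :=
        setIntegral_mono_on hlin (hcdf.intervalIntegrable.abs.def') measurableSet_uIoc hbound

theorem integral_sq_abs_sub_sub_abs_sub_le (u v : ℝ) :
    ∫ y, (|u - y| - |v - y|) ^ 2 ∂ν ≤ |u - v| ^ 2 := by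
  have hle : ∀ y, (|u - y| - |v - y|) ^ 2 ≤ |u - v| ^ 2 := fun y => by
    have h := abs_le.mp (abs_abs_sub_abs_le_abs_sub (u - y) (v - y))
    rw [sub_sub_sub_cancel_right] at h
    exact sq_le_sq' h.1 h.2
  refine (integral_mono_of_nonneg (ae_of_all _ fun y => sq_nonneg _) (integrable_const _)
    (ae_of_all _ hle)).trans_eq ?_
  simp

end ProbabilityMeasure

theorem stmt_17_general {α : Type*} (ν : α → Measure ℝ) [∀ x, IsProbabilityMeasure (ν x)]
    (hYint : ∀ x, Integrable (fun y => y) (ν x))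
    (F : α → ℝ → ℝ) (hF : ∀ x u, F x u = ((ν x) (Set.Iic u)).toReal)
    (s : α → ℝ) (hmed : ∀ x, F x (s x) = 1 / 2)
    (a b : α → ℝ)
    (hinc : ∀ x u, a x * min |u - s x| (b x) ≤ |F x u - F x (s x)|)
    (am μm : ℝ) (ham : 0 < am) (hμm : 0 < μm)
    (ham' : ∀ x, am ≤ a x) (hμm' : ∀ x, μm ≤ a x * b x)
    (ℓx : α → ℝ → ℝ)
    (hℓx : ∀ x u, ℓx x u = (∫ y, |u - y| ∂(ν x)) - ∫ y, |s x - y| ∂(ν x)) :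
    ∀ x u v, (∫ y, (|u - y| - |v - y|) ^ 2 ∂(ν x))
      ≤ max (4 / am) ((4 / μm) * |u - v|) * (ℓx x u + ℓx x v) := by
  intro x u v
  have hcdf : ∀ t, F x t = cdf (ν x) t := fun t => (hF x t).trans (cdf_eq_real _ t).symm
  have hexcess : ∀ w, |w - s x| * min (am * |w - s x|) μm ≤ ℓx x w := by
    intro w
    have hint : ∀ c, Integrable (fun y => |c - y|) (ν x) :=
      fun c => ((integrable_const c).sub (hYint x)).abs
    rw [hℓx, ← integral_sub (hint w) (hint (s x))]
    refine abs_sub_mul_min_le_integral_abs_sub_sub_abs_sub (ν x) hμm.le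
      ((hcdf _).symm.trans (hmed x)) (fun t => ?_) w
    calc min (am * |t - s x|) μm ≤ a x * min |t - s x| (b x) :=
          min_mul_le_mul_min (ham' x) (hμm' x) (abs_nonneg _)
      _ ≤ |cdf (ν x) t - 1 / 2| := by rw [← hcdf, ← hmed x]; exact hinc x t
  calc ∫ y, (|u - y| - |v - y|) ^ 2 ∂(ν x) ≤ |u - v| ^ 2 :=
        integral_sq_abs_sub_sub_abs_sub_le (ν x) u v
    _ ≤ max (4 / am) (4 / μm * |u - v|) * (|u - s x| * min (am * |u - s x|) μm
          + |v - s x| * min (am * |v - s x|) μm) :=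
        sq_le_max_mul_add ham hμm (abs_nonneg _) (abs_nonneg _) (abs_nonneg _)
          (abs_sub_le u (s x) v |>.trans_eq (by rw [abs_sub_comm (s x)]))
    _ ≤ max (4 / am) ((4 / μm) * |u - v|) * (ℓx x u + ℓx x v) := by
        gcongr <;> exact hexcess _

/-- Proposition (prop_sc): median regression variance bound. For each `x`, let `ν x` be
the conditional law of `Y` given `X = x`, with continuous cdf `F x`, unique conditional
median `s x`, and local increase condition
`|F x u - F x (s x)| ≥ a x · min(|u - s x|, b x)`. With `a_m ≤ a x` and
`μ_m ≤ a x * b x` (`a_m, μ_m > 0`), the conditional excess risks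
`ℓx x u = E[|u - Y| | X = x] - E[|s x - Y| | X = x]` satisfy, for all `x, u, v`:
`E[(|u - Y| - |v - Y|)² | X = x] ≤ max (4/a_m) ((4/μ_m)|u - v|) (ℓx x u + ℓx x v)`. -/
theorem stmt_17 {α : Type*} (ν : α → Measure ℝ) [∀ x, IsProbabilityMeasure (ν x)]
    (hYint : ∀ x, Integrable (fun y => y) (ν x))
    (F : α → ℝ → ℝ) (hF : ∀ x u, F x u = ((ν x) (Set.Iic u)).toReal)
    (hFcont : ∀ x, Continuous (F x))
    (s : α → ℝ) (hmed : ∀ x, F x (s x) = 1 / 2)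
    (a b : α → ℝ) (ha : ∀ x, 0 < a x) (hb : ∀ x, 0 < b x)
    (hinc : ∀ x u, a x * min |u - s x| (b x) ≤ |F x u - F x (s x)|)
    (am μm : ℝ) (ham : 0 < am) (hμm : 0 < μm)
    (ham' : ∀ x, am ≤ a x) (hμm' : ∀ x, μm ≤ a x * b x)
    (ℓx : α → ℝ → ℝ)
    (hℓx : ∀ x u, ℓx x u = (∫ y, |u - y| ∂(ν x)) - ∫ y, |s x - y| ∂(ν x)) :
    ∀ x u v, (∫ y, (|u - y| - |v - y|) ^ 2 ∂(ν x))
      ≤ max (4 / am) ((4 / μm) * |u - v|) * (ℓx x u + ℓx x v) :=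
  stmt_17_general ν hYint F hF s hmed a b hinc am μm ham hμm ham' hμm' ℓx hℓx
end

section
/- ε-insensitive loss dominance: fix x and a probability density p symmetric and unimodal around m (nonincreasing on [m,∞)), with cdf F. For ε ≥ 0 define R_ε(u) = ∫ ψ_ε(u−y) p(y) dy with ψ_ε(z) = max(|z|−ε, 0). Then R_ε is differentiable with R_ε'(u) = F(u−ε) − (1 − F(u+ε)), R_ε attains its minimum at m, and for all u ∈ ℝ: R_ε(u) − R_ε(m) ≤ R_0(u) − R_0(m). -/
/-!
Let `L x = ∫ (x - y)₊ p y dy`. For all `a, b` one has `(b - a) F a ≤ L b - L a` pointwise under the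
integral, and `F` is continuous, so `L' = F`. Since `(|z| - ε)₊ = (z - ε)₊ + (z + ε)₊ - (z + ε)`
for `ε ≥ 0`, `R ε u = L (u - ε) + L (u + ε) - (u + ε) + ∫ y p y`: this gives the derivative, and
the subgradient inequality at `m ± ε` with `F (m + ε) + F (m - ε) = 1` gives the minimum at `m`.
Finally `R ε u - R 0 u + ε` is the second difference `L (u - ε) + L (u + ε) - 2 L u`, whose
derivative in `ε` is the mass `F (u + ε) - F (u - ε)` of the window of radius `ε` around `u`;
for a symmetric unimodal density this is largest at `u = m`.
-/

open MeasureTheory Set Filter Topology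

noncomputable def lowerPartialMoment (p : ℝ → ℝ) (x : ℝ) : ℝ := ∫ y, max (x - y) 0 * p y

section

variable {p : ℝ → ℝ}

theorem integrable_mul_of_abs_le_const_add_abs (hp : Integrable p)
    (hmom : Integrable fun y => |y| * p y) {g : ℝ → ℝ} (hg : Continuous g) {a : ℝ}
    (hga : ∀ y, |g y| ≤ a + |y|) : Integrable fun y => g y * p y := by
  refine ((hp.norm.const_mul a).add hmom.norm).mono' (hg.aestronglyMeasurable.mul hp.1) ?_
  refine Eventually.of_forall fun y => ?_
  simp only [Pi.add_apply, norm_mul, Real.norm_eq_abs, abs_abs]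
  nlinarith [hga y, abs_nonneg (p y)]

theorem integrable_max_sub_mul (hp : Integrable p) (hmom : Integrable fun y => |y| * p y)
    (x : ℝ) : Integrable fun y => max (x - y) 0 * p y :=
  integrable_mul_of_abs_le_const_add_abs hp hmom (a := |x|) (by fun_prop) fun y => by
    rw [abs_of_nonneg (le_max_right _ _)]
    exact max_le (by linarith [le_abs_self x, neg_abs_le y]) (by positivity)

theorem integrable_id_mul (hp : Integrable p) (hmom : Integrable fun y => |y| * p y) :
    Integrable fun y => y * p y :=
  integrable_mul_of_abs_le_const_add_abs hp hmom (a := 0) continuous_id fun y => by simp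

theorem continuous_integral_Iic (hp : Integrable p) : Continuous fun x => ∫ y in Iic x, p y := by
  have h : (fun x => ∫ y in Iic x, p y) = fun x => (∫ y in Iic 0, p y) + ∫ y in 0..x, p y := by
    funext x
    rw [← intervalIntegral.integral_Iic_sub_Iic hp.integrableOn hp.integrableOn]
    ring
  rw [h]
  exact continuous_const.add
    (intervalIntegral.continuous_primitive (fun _ _ => hp.intervalIntegrable) 0)

theorem sub_mul_le_lowerPartialMoment_sub (hp0 : ∀ y, 0 ≤ p y) (hp : Integrable p)
    (hmom : Integrable fun y => |y| * p y) (a b : ℝ) :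
    (b - a) * ∫ y in Iic a, p y ≤ lowerPartialMoment p b - lowerPartialMoment p a := by
  rw [lowerPartialMoment, lowerPartialMoment,
    ← integral_sub (integrable_max_sub_mul hp hmom b) (integrable_max_sub_mul hp hmom a),
    ← integral_indicator measurableSet_Iic, ← integral_const_mul]
  refine integral_mono ((hp.indicator measurableSet_Iic).const_mul _)
    ((integrable_max_sub_mul hp hmom b).sub (integrable_max_sub_mul hp hmom a)) fun y => ?_
  rw [← sub_mul]
  by_cases hy : y ≤ a
  · rw [indicator_of_mem (mem_Iic.2 hy)]
    exact mul_le_mul_of_nonneg_right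
      (by rw [max_eq_left (by linarith : 0 ≤ a - y)]; linarith [le_max_left (b - y) 0]) (hp0 y)
  · rw [indicator_of_notMem (by simpa using hy), mul_zero]
    exact mul_nonneg
      (by rw [max_eq_right (by linarith : a - y ≤ 0)]; simp) (hp0 y)

theorem hasDerivAt_lowerPartialMoment (hp0 : ∀ y, 0 ≤ p y) (hp : Integrable p)
    (hmom : Integrable fun y => |y| * p y) (x : ℝ) :
    HasDerivAt (lowerPartialMoment p) (∫ y in Iic x, p y) x := by
  set F := fun x => ∫ y in Iic x, p y
  have hF := (continuous_integral_Iic hp).tendsto x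
  have hsub := sub_mul_le_lowerPartialMoment_sub hp0 hp hmom
  rw [hasDerivAt_iff_tendsto_slope]
  have hlo : Tendsto (fun b => min (F x) (F b)) (𝓝[≠] x) (𝓝 (F x)) := by
    have h : Tendsto (fun b => min (F x) (F b)) (𝓝 x) (𝓝 (min (F x) (F x))) :=
      tendsto_const_nhds.min hF
    exact (min_self (F x) ▸ h).mono_left nhdsWithin_le_nhds
  have hhi : Tendsto (fun b => max (F x) (F b)) (𝓝[≠] x) (𝓝 (F x)) := by
    have h : Tendsto (fun b => max (F x) (F b)) (𝓝 x) (𝓝 (max (F x) (F x))) :=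
      tendsto_const_nhds.max hF
    exact (max_self (F x) ▸ h).mono_left nhdsWithin_le_nhds
  -- the slope lies between the subgradients `F x` and `F b`
  refine tendsto_of_tendsto_of_tendsto_of_le_of_le' hlo hhi ?_ ?_ <;>
    filter_upwards [self_mem_nhdsWithin] with b hb <;>
    have h1 := hsub x b <;> have h2 := hsub b x <;>
    rw [slope_def_field] <;>
    rcases lt_or_gt_of_ne hb with hbx | hbx
  · exact (min_le_right _ _).trans ((le_div_iff_of_neg (by linarith)).2 (by linarith))
  · exact (min_le_left _ _).trans ((le_div_iff₀ (by linarith)).2 (by linarith))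
  · exact ((div_le_iff_of_neg (by linarith)).2 (by linarith)).trans (le_max_left _ _)
  · exact ((div_le_iff₀ (by linarith)).2 (by linarith)).trans (le_max_right _ _)

theorem max_abs_sub_sub_eq {ε : ℝ} (hε : 0 ≤ ε) (u y : ℝ) :
    max (|u - y| - ε) 0 = max (u - ε - y) 0 + max (u + ε - y) 0 - (u + ε - y) := by
  rcases abs_cases (u - y) with ⟨h, _⟩ | ⟨h, _⟩ <;> rw [h] <;> simp only [max_def] <;>
    split_ifs <;> linarith

theorem integral_max_abs_sub_sub_mul_eq (hp : Integrable p) (hp1 : ∫ y, p y = 1)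
    (hmom : Integrable fun y => |y| * p y) {ε : ℝ} (hε : 0 ≤ ε) (u : ℝ) :
    ∫ y, max (|u - y| - ε) 0 * p y =
      lowerPartialMoment p (u - ε) + lowerPartialMoment p (u + ε) - (u + ε) + ∫ y, y * p y := by
  have hpt : (fun y => max (|u - y| - ε) 0 * p y) = fun y =>
      max (u - ε - y) 0 * p y + max (u + ε - y) 0 * p y - ((u + ε) * p y - y * p y) := by
    funext y
    rw [max_abs_sub_sub_eq hε]
    ring
  have hsum : Integrable fun y => max (u - ε - y) 0 * p y + max (u + ε - y) 0 * p y :=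
    (integrable_max_sub_mul hp hmom _).add (integrable_max_sub_mul hp hmom _)
  have haff : Integrable fun y => (u + ε) * p y - y * p y :=
    (hp.const_mul _).sub (integrable_id_mul hp hmom)
  rw [hpt, integral_sub hsum haff,
    integral_add (integrable_max_sub_mul hp hmom _) (integrable_max_sub_mul hp hmom _),
    integral_sub (hp.const_mul _) (integrable_id_mul hp hmom), integral_const_mul, hp1,
    lowerPartialMoment, lowerPartialMoment]
  ring

variable {m : ℝ}

theorem integral_Iic_add_integral_Iic_of_symm (hp : Integrable p) (hp1 : ∫ y, p y = 1)
    (hsym : ∀ t, p (m + t) = p (m - t)) (s : ℝ) :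
    (∫ y in Iic (m + s), p y) + ∫ y in Iic (m - s), p y = 1 := by
  have hpre : (fun y => 2 * m - y) ⁻¹' Iic (m - s) = Ici (m + s) := by
    ext y; simp only [mem_preimage, mem_Iic, mem_Ici]; constructor <;> intro h <;> linarith
  have hreflect : ∫ y in Iic (m - s), p y = ∫ y in Ioi (m + s), p y := by
    rw [← (Measure.measurePreserving_sub_left volume (2 * m)).setIntegral_preimage_emb
      (Homeomorph.subLeft (2 * m)).measurableEmbedding, hpre, integral_Ici_eq_integral_Ioi]
    refine setIntegral_congr_fun measurableSet_Ioi fun y _ => ?_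
    rw [show 2 * m - y = m + (m - y) by ring, hsym, sub_sub_cancel]
  rw [hreflect, intervalIntegral.integral_Iic_add_Ioi hp.integrableOn hp.integrableOn, hp1]

theorem apply_le_apply_of_abs_sub_le (hsym : ∀ t, p (m + t) = p (m - t))
    (hunimodal : ∀ ⦃u v : ℝ⦄, m ≤ u → u ≤ v → p v ≤ p u) {x y : ℝ} (h : |x - m| ≤ |y - m|) :
    p y ≤ p x := by
  have hfold : ∀ z, p z = p (m + |z - m|) := fun z => by
    rcases abs_cases (z - m) with ⟨hz, _⟩ | ⟨hz, _⟩ <;> rw [hz]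
    · ring_nf
    · rw [hsym]; ring_nf
  rw [hfold x, hfold y]
  exact hunimodal (by linarith [abs_nonneg (x - m)]) (by linarith)

theorem integral_Iic_add_sub_integral_Iic_sub_le (hp : Integrable p)
    (hsym : ∀ t, p (m + t) = p (m - t))
    (hunimodal : ∀ ⦃u v : ℝ⦄, m ≤ u → u ≤ v → p v ≤ p u) {t : ℝ} (ht : 0 ≤ t) (u : ℝ) :
    (∫ y in Iic (u + t), p y) - ∫ y in Iic (u - t), p y ≤
      (∫ y in Iic (m + t), p y) - ∫ y in Iic (m - t), p y := by
  -- shifting by `2 t` moves mass from `[m - t, u - t]` to `[m + t, u + t]`, away from `m`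
  have hshift : ∫ y in (m + t)..(u + t), p y = ∫ y in (m - t)..(u - t), p (y + 2 * t) := by
    rw [intervalIntegral.integral_comp_add_right]; ring_nf
  have hii : ∀ a b : ℝ, IntervalIntegrable (fun y => p (y + 2 * t)) volume a b :=
    fun a b => (hp.comp_add_right (2 * t)).intervalIntegrable
  have hdiff : ∫ y in (m + t)..(u + t), p y ≤ ∫ y in (m - t)..(u - t), p y := by
    rw [hshift]
    rcases le_total m u with hmu | hum
    · refine intervalIntegral.integral_mono_on (by linarith) (hii _ _) hp.intervalIntegrable
        fun y hy => apply_le_apply_of_abs_sub_le hsym hunimodal (abs_le_abs ?_ ?_) <;>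
        linarith [hy.1]
    · rw [intervalIntegral.integral_symm (u - t), intervalIntegral.integral_symm (u - t)]
      refine neg_le_neg (intervalIntegral.integral_mono_on (by linarith) hp.intervalIntegrable
        (hii _ _) fun y hy => apply_le_apply_of_abs_sub_le hsym hunimodal (abs_le.2 ⟨?_, ?_⟩)) <;>
        linarith [hy.2, neg_le_abs (y - m)]
  rw [← intervalIntegral.integral_Iic_sub_Iic hp.integrableOn hp.integrableOn,
    ← intervalIntegral.integral_Iic_sub_Iic hp.integrableOn hp.integrableOn] at hdiff
  linarith

theorem lowerPartialMoment_secondDiff_le (hp0 : ∀ y, 0 ≤ p y) (hp : Integrable p)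
    (hmom : Integrable fun y => |y| * p y) (hsym : ∀ t, p (m + t) = p (m - t))
    (hunimodal : ∀ ⦃u v : ℝ⦄, m ≤ u → u ≤ v → p v ≤ p u) {ε : ℝ} (hε : 0 ≤ ε) (u : ℝ) :
    lowerPartialMoment p (u - ε) + lowerPartialMoment p (u + ε) - 2 * lowerPartialMoment p u ≤
      lowerPartialMoment p (m - ε) + lowerPartialMoment p (m + ε) - 2 * lowerPartialMoment p m := by
  set L := lowerPartialMoment p
  have hL := hasDerivAt_lowerPartialMoment hp0 hp hmom
  have hsd : ∀ v t, HasDerivAt (fun t => L (v - t) + L (v + t))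
      ((∫ y in Iic (v + t), p y) - ∫ y in Iic (v - t), p y) t := fun v t =>
    (((hL (v - t)).comp_const_sub v t).add ((hL (v + t)).comp_const_add v t)).congr_deriv
      (by ring)
  have hmono : MonotoneOn (fun t => L (m - t) + L (m + t) - (L (u - t) + L (u + t))) (Ici 0) := by
    refine monotoneOn_of_hasDerivWithinAt_nonneg (convex_Ici 0)
      (fun t _ => ((hsd m t).sub (hsd u t)).continuousAt.continuousWithinAt)
      (fun t _ => ((hsd m t).sub (hsd u t)).hasDerivWithinAt) fun t ht => ?_
    rw [interior_Ici] at ht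
    exact sub_nonneg.2 (integral_Iic_add_sub_integral_Iic_sub_le hp hsym hunimodal ht.le u)
  have := hmono self_mem_Ici hε hε
  simp only [sub_zero, add_zero] at this
  linarith

end

theorem stmt_19_general (p : ℝ → ℝ) (m : ℝ)
    (hp0 : ∀ y, 0 ≤ p y)
    (hpint : Integrable p) (hp1 : (∫ y, p y) = 1)
    (hmoment : Integrable (fun y => |y| * p y))
    (hsym : ∀ t : ℝ, p (m + t) = p (m - t))
    (hunimodal : ∀ ⦃u v : ℝ⦄, m ≤ u → u ≤ v → p v ≤ p u)
    (F : ℝ → ℝ) (hF : ∀ u, F u = ∫ y in Set.Iic u, p y)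
    (R : ℝ → ℝ → ℝ) (hR : ∀ ε u, R ε u = ∫ y, max (|u - y| - ε) 0 * p y) :
    ∀ ε : ℝ, 0 ≤ ε →
      (∀ u, HasDerivAt (R ε) (F (u - ε) - (1 - F (u + ε))) u) ∧
      (∀ u, R ε m ≤ R ε u) ∧
      (∀ u, R ε u - R ε m ≤ R 0 u - R 0 m) := by
  intro ε hε
  have hRL : ∀ e, 0 ≤ e → R e = fun u =>
      lowerPartialMoment p (u - e) + lowerPartialMoment p (u + e) - (u + e) + ∫ y, y * p y :=
    fun e he => funext fun u =>
      (hR e u).trans (integral_max_abs_sub_sub_mul_eq hpint hp1 hmoment he u)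
  have hL : ∀ x, HasDerivAt (lowerPartialMoment p) (F x) x := fun x =>
    hF x ▸ hasDerivAt_lowerPartialMoment hp0 hpint hmoment x
  have hFm : F (m + ε) + F (m - ε) = 1 := by
    simpa only [hF] using integral_Iic_add_integral_Iic_of_symm hpint hp1 hsym ε
  refine ⟨fun u => ?_, fun u => ?_, fun u => ?_⟩
  · rw [hRL ε hε]
    have := ((((hL (u - ε)).comp_sub_const u ε).add ((hL (u + ε)).comp_add_const u ε)).sub
      ((hasDerivAt_id u).add_const ε)).add_const (∫ y, y * p y)
    exact this.congr_deriv (by ring)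
  · have h₁ := sub_mul_le_lowerPartialMoment_sub hp0 hpint hmoment (m - ε) (u - ε)
    have h₂ := sub_mul_le_lowerPartialMoment_sub hp0 hpint hmoment (m + ε) (u + ε)
    rw [← hF] at h₁ h₂
    rw [hRL ε hε]
    dsimp only
    linear_combination h₁ + h₂ - (u - m) * hFm
  · have := lowerPartialMoment_secondDiff_le hp0 hpint hmoment hsym hunimodal hε u
    simp only [hRL ε hε, hRL 0 le_rfl, sub_zero, add_zero]
    linarith

/-- ε-insensitive loss dominance: let `p` be a probability density symmetric and
unimodal around `m` (nonincreasing on `[m,∞)`), with cdf `F`, a finite first moment,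
and `R ε u = ∫ ψ_ε(u - y) p y dy` where `ψ_ε z = max (|z| - ε) 0`. Then for each
`ε ≥ 0`: `R ε` is differentiable with `R_ε'(u) = F(u-ε) - (1 - F(u+ε))`, `R ε` attains
its minimum at `m`, and `R ε u - R ε m ≤ R 0 u - R 0 m` for all `u`. -/
theorem stmt_19 (p : ℝ → ℝ) (m : ℝ)
    (hp0 : ∀ y, 0 ≤ p y) (hpm : Measurable p)
    (hpint : Integrable p) (hp1 : (∫ y, p y) = 1)
    (hmoment : Integrable (fun y => |y| * p y))
    (hsym : ∀ t : ℝ, p (m + t) = p (m - t))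
    (hunimodal : ∀ ⦃u v : ℝ⦄, m ≤ u → u ≤ v → p v ≤ p u)
    (F : ℝ → ℝ) (hF : ∀ u, F u = ∫ y in Set.Iic u, p y)
    (R : ℝ → ℝ → ℝ) (hR : ∀ ε u, R ε u = ∫ y, max (|u - y| - ε) 0 * p y) :
    ∀ ε : ℝ, 0 ≤ ε →
      (∀ u, HasDerivAt (R ε) (F (u - ε) - (1 - F (u + ε))) u) ∧
      (∀ u, R ε m ≤ R ε u) ∧
      (∀ u, R ε u - R ε m ≤ R 0 u - R 0 m) :=
  stmt_19_general p m hp0 hpint hp1 hmoment hsym hunimodal F hF R hR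
end
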